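/- arXiv:2401.04060 — 10 statements merged into one kernel-verified Lean document; each statement's English description precedes it below -/
import Mathlib

section
/- Let Ω and X be finite sets, v : X → ℝ a valuation, p a probability mass function on Ω, ω₀ ∈ Ω, and suppose δ > 0 satisfies |v(x) − v(y)| ≥ δ for all distinct x, y ∈ X, and 0 ≤ v(x) ≤ 1 for all x. If p(ω₀) > 1/(1+δ), then for any two acts f, g : Ω → X with v(f(ω₀)) > v(g(ω₀)), the expected utility of f strictly exceeds that of g, i.e. ∑_{ω} p(ω)·v(f(ω)) > ∑_{ω} p(ω)·v(g(ω)). -/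
/-- A sufficiently concentrated belief makes the SEU preference `{ω₀}`-lexicographic. -/
theorem stmt0 {Ω X : Type*} [Fintype Ω] [Fintype X]
    (v : X → ℝ) (p : Ω → ℝ) (ω₀ : Ω) (δ : ℝ)
    (hp0 : ∀ ω, 0 ≤ p ω) (hp1 : ∑ ω, p ω = 1)
    (hδ : 0 < δ)
    (hgap : ∀ x y : X, x ≠ y → δ ≤ |v x - v y|)
    (hv0 : ∀ x, 0 ≤ v x) (hv1 : ∀ x, v x ≤ 1)
    (hconc : 1 / (1 + δ) < p ω₀)
    (f g : Ω → X) (hfg : v (g ω₀) < v (f ω₀)) :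
    ∑ ω, p ω * v (g ω) < ∑ ω, p ω * v (f ω) := by
  classical
  have h1δ : (0:ℝ) < 1 + δ := by linarith
  have hp₀ : 0 ≤ p ω₀ := hp0 ω₀
  have hne : f ω₀ ≠ g ω₀ := fun h => by rw [h] at hfg; exact lt_irrefl _ hfg
  have hgap' : v (g ω₀) + δ ≤ v (f ω₀) := by
    have := hgap (f ω₀) (g ω₀) hne
    rw [abs_of_pos (by linarith)] at this
    linarith
  have hlow : p ω₀ * v (f ω₀) ≤ ∑ ω, p ω * v (f ω) := by
    apply Finset.single_le_sum (f := fun ω => p ω * v (f ω))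
    · intro i _; exact mul_nonneg (hp0 i) (hv0 _)
    · exact Finset.mem_univ ω₀
  have hrest : ∑ ω ∈ Finset.univ.erase ω₀, p ω = 1 - p ω₀ := by
    have := Finset.add_sum_erase Finset.univ p (Finset.mem_univ ω₀)
    rw [hp1] at this
    linarith
  have hup : ∑ ω, p ω * v (g ω) ≤ p ω₀ * v (g ω₀) + (1 - p ω₀) := by
    rw [← Finset.add_sum_erase Finset.univ (fun ω => p ω * v (g ω)) (Finset.mem_univ ω₀),
      ← hrest]
    gcongr with i hi
    calc p i * v (g i) ≤ p i * 1 := by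
          exact mul_le_mul_of_nonneg_left (hv1 _) (hp0 i)
      _ = p i := mul_one _
  have hkey : 1 - p ω₀ < p ω₀ * δ := by
    rw [div_lt_iff₀ h1δ] at hconc
    nlinarith
  have : p ω₀ * v (g ω₀) + (1 - p ω₀) < p ω₀ * v (f ω₀) := by nlinarith
  linarith
end

section
/- Let Ω be a finite set, let A ⊆ Ω be nonempty, let v : X → ℝ be a valuation on a finite set X, and let p be a strictly positive probability mass function on Ω. Then there exists θ₀ ∈ (0,1) such that for all θ ∈ (θ₀,1), the preference given by (v, p^{θ,A}) is A-lexicographic: for any acts f, g : Ω → X, if ∑_{ω∈A} p^{θ,A}(ω)·v(f(ω)) > ∑_{ω∈A} p^{θ,A}(ω)·v(g(ω)) then ∑_{ω∈Ω} p^{θ,A}(ω)·v(f(ω)) > ∑_{ω∈Ω} p^{θ,A}(ω)·v(g(ω)). -/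
/-- The belief `p^{θ,A}` of the paper. -/
noncomputable def condScale {Ω : Type*} [Fintype Ω] [DecidableEq Ω]
    (p : Ω → ℝ) (A : Finset Ω) (θ : ℝ) (ω : Ω) : ℝ :=
  if ω ∈ A then θ * p ω / ∑ x ∈ A, p x else (1 - θ) * p ω / ∑ x ∈ Aᶜ, p x

/-- For `θ` close enough to `1`, the preference `(v, p^{θ,A})` is `A`-lexicographic. -/
theorem stmt2 {Ω X : Type*} [Fintype Ω] [Fintype X] [DecidableEq Ω]
    (A : Finset Ω) (hA : A.Nonempty)
    (v : X → ℝ) (p : Ω → ℝ) (hp0 : ∀ ω, 0 < p ω) (hp1 : ∑ ω, p ω = 1) :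
    ∃ θ₀ ∈ Set.Ioo (0 : ℝ) 1, ∀ θ ∈ Set.Ioo θ₀ 1, ∀ f g : Ω → X,
      (∑ ω ∈ A, condScale p A θ ω * v (g ω)) < (∑ ω ∈ A, condScale p A θ ω * v (f ω)) →
      (∑ ω, condScale p A θ ω * v (g ω)) < (∑ ω, condScale p A θ ω * v (f ω)) := by
  classical
  have hpA : 0 < ∑ x ∈ A, p x := Finset.sum_pos (fun i _ => hp0 i) hA
  have sumA : ∀ (θ : ℝ) (f : Ω → X),
      ∑ ω ∈ A, condScale p A θ ω * v (f ω)
        = θ / (∑ x ∈ A, p x) * ∑ ω ∈ A, p ω * v (f ω) := by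
    intro θ f
    rw [Finset.mul_sum]
    refine Finset.sum_congr rfl fun ω hω => ?_
    rw [condScale, if_pos hω]
    ring
  by_cases hC : (Aᶜ : Finset Ω) = ∅
  · refine ⟨1/2, by norm_num, fun θ hθ f g h => ?_⟩
    have hA' : A = Finset.univ := by
      have := congrArg (fun s => sᶜ) hC
      simpa using this
    have e1 : (∑ ω, condScale p A θ ω * v (g ω)) = ∑ ω ∈ A, condScale p A θ ω * v (g ω) := by
      rw [hA']
    have e2 : (∑ ω, condScale p A θ ω * v (f ω)) = ∑ ω ∈ A, condScale p A θ ω * v (f ω) := by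
      rw [hA']
    rw [e1, e2]; exact h
  · have hCne : (Aᶜ : Finset Ω).Nonempty := Finset.nonempty_iff_ne_empty.mpr hC
    have hpC : 0 < ∑ x ∈ Aᶜ, p x := Finset.sum_pos (fun i _ => hp0 i) hCne
    have sumC : ∀ (θ : ℝ) (f : Ω → X),
        ∑ ω ∈ Aᶜ, condScale p A θ ω * v (f ω)
          = (1 - θ) / (∑ x ∈ Aᶜ, p x) * ∑ ω ∈ Aᶜ, p ω * v (f ω) := by
      intro θ f
      rw [Finset.mul_sum]
      refine Finset.sum_congr rfl fun ω hω => ?_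
      rw [condScale, if_neg (Finset.mem_compl.mp hω)]
      ring
    by_cases hX : Nonempty X
    · set pA := ∑ x ∈ A, p x with hpAdef
      set pC := ∑ x ∈ Aᶜ, p x with hpCdef
      set DD : (Ω → X) × (Ω → X) → ℝ :=
        fun q => (∑ ω ∈ A, p ω * v (q.1 ω)) - ∑ ω ∈ A, p ω * v (q.2 ω) with hDD
      set EE : (Ω → X) × (Ω → X) → ℝ :=
        fun q => (∑ ω ∈ Aᶜ, p ω * v (q.2 ω)) - ∑ ω ∈ Aᶜ, p ω * v (q.1 ω) with hEE
      set r : (Ω → X) × (Ω → X) → ℝ :=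
        fun q => if 0 < DD q then (pA * EE q) / (pC * DD q) else 0 with hr
      have : Nonempty (Ω → X) := ⟨fun _ => Classical.ofNonempty⟩
      have hPne : (Finset.univ : Finset ((Ω → X) × (Ω → X))).Nonempty :=
        Finset.univ_nonempty
      set R0 : ℝ := max (Finset.univ.sup' hPne r) 0 with hR0
      have hR0nonneg : 0 ≤ R0 := le_max_right _ _
      have hrq : ∀ q, r q ≤ R0 :=
        fun q => le_max_of_le_left (Finset.le_sup' r (Finset.mem_univ q))
      refine ⟨max (1/2) (R0 / (R0 + 1)), ⟨by positivity, ?_⟩, ?_⟩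
      · apply max_lt (by norm_num)
        rw [div_lt_one (by linarith)]
        linarith
      intro θ hθ f g h
      have hθ1 : θ < 1 := hθ.2
      have hθhalf : 1/2 < θ := lt_of_le_of_lt (le_max_left _ _) hθ.1
      have hθpos : 0 < θ := by linarith
      have hθR : R0 / (R0 + 1) < θ := lt_of_le_of_lt (le_max_right _ _) hθ.1
      have hkeyθ : R0 * (1 - θ) < θ := by
        rw [div_lt_iff₀ (by linarith)] at hθR
        nlinarith
      -- derive positivity of DD (f,g)
      rw [sumA θ g, sumA θ f] at h
      have hSA : (∑ ω ∈ A, p ω * v (g ω)) < ∑ ω ∈ A, p ω * v (f ω) := by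
        have hpos : 0 < θ / pA := div_pos hθpos hpA
        exact lt_of_mul_lt_mul_left h (le_of_lt hpos)
      have hD : 0 < DD (f, g) := by simp only [hDD]; simp; linarith
      have hr2 : r (f, g) * (1 - θ) < θ :=
        lt_of_le_of_lt (mul_le_mul_of_nonneg_right (hrq (f, g)) (by linarith)) hkeyθ
      simp only [hr, if_pos hD] at hr2
      have hmul : 0 < pC * DD (f, g) := mul_pos hpC hD
      have hkey : (1 - θ) * (pA * EE (f, g)) < θ * (pC * DD (f, g)) := by
        have h3 := mul_lt_mul_of_pos_right hr2 hmul
        have h4 : (pA * EE (f, g)) / (pC * DD (f, g)) * (1 - θ) * (pC * DD (f, g))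
            = (1 - θ) * (pA * EE (f, g)) := by
          field_simp
        rw [h4] at h3
        linarith
      have final : (1 - θ) / pC * EE (f, g) < θ / pA * DD (f, g) := by
        rw [div_mul_eq_mul_div, div_mul_eq_mul_div, div_lt_div_iff₀ hpC hpA]
        nlinarith [hkey]
      -- assemble
      rw [← Finset.sum_add_sum_compl A (fun ω => condScale p A θ ω * v (g ω)),
          ← Finset.sum_add_sum_compl A (fun ω => condScale p A θ ω * v (f ω)),
          sumA θ g, sumA θ f, sumC θ g, sumC θ f]
      simp only [hDD, hEE] at final
      beta_reduce at final
      rw [mul_sub, mul_sub] at final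
      linarith
    · exact ⟨1/2, by norm_num, fun θ _ f _ _ => (hX ⟨f hA.choose⟩).elim⟩
end

section
/- Let Ω be a finite set and let γ : P^m → Pow(Ω) be a function from m-tuples of strictly positive probability mass functions on Ω to subsets of Ω. Suppose γ is strategy-proof in the maximizing sense: for every profile p, every agent i, and every alternative belief p'_i, we have p_i(γ(p)) ≥ p_i(γ(p'_i, p_{−i})). Then any two distinct events E, E' in the range of γ are non-nested: E ∖ E' ≠ ∅ and E' ∖ E ≠ ∅. -/
/-- A strictly positive, normalized, event-injective belief. -/
def IsBelief {Ω : Type*} [Fintype Ω] (r : Ω → ℝ) : Prop :=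
  (∀ ω, 0 < r ω) ∧ (∑ ω, r ω = 1) ∧
  ∀ A B : Finset Ω, (∑ ω ∈ A, r ω) = (∑ ω ∈ B, r ω) → A = B

/-!
Suppose `E ⊆ E'` are outcomes at belief profiles `p` and `q`. Take a single belief `r` under
which every point of `E` outweighs all of `Eᶜ` and every point of `E'` outweighs all of `E'ᶜ`
(weights `2 ^ idx` with `idx` increasing along the chain `E'ᶜ, E' \ E, E`). Switch the agents
to `r` one at a time. An agent holding `r` must not gain by switching back, so an event on which
`r` is concentrated, once contained in the outcome, stays contained; starting from `q` this keeps
`E' ⊆ γ`. An agent holding `p i` must not gain by switching to `r`, and `p i` separates events,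
so starting from `p` the outcome stays exactly `E`. At the constant profile `r`, `E' ⊆ E`.
-/

open Finset Function

theorem Function.apply_const_of_update_closed {ι β : Type*} [Fintype ι] [DecidableEq ι]
    (Q : (ι → β) → Prop) (b : β) (hQ : ∀ f i, Q f → Q (update f i b)) {f : ι → β}
    (hf : Q f) : Q fun _ => b := by
  suffices ∀ s : Finset ι, Q (s.piecewise (fun _ => b) f) by simpa using this univ
  intro s
  induction s using Finset.induction_on with
  | empty => simpa using hf
  | insert i s _ ih => simpa [piecewise_insert] using hQ _ i ih

section Belief

variable {Ω : Type*} [Fintype Ω]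

def IsConcentratedOn [DecidableEq Ω] (r : Ω → ℝ) (D : Finset Ω) : Prop :=
  ∀ ω ∈ D, ∑ ω' ∈ Dᶜ, r ω' < r ω

theorem IsConcentratedOn.subset_of_sum_le [DecidableEq Ω] {r : Ω → ℝ} {D B : Finset Ω}
    (hD : IsConcentratedOn r D) (hr : ∀ ω, 0 ≤ r ω)
    (hle : ∑ ω ∈ D, r ω ≤ ∑ ω ∈ B, r ω) : D ⊆ B := by
  by_contra hDB
  obtain ⟨ω, hωD, hωB⟩ := not_subset.1 hDB
  have hin : ∑ ω' ∈ B ∩ D, r ω' ≤ ∑ ω' ∈ D.erase ω, r ω' :=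
    sum_le_sum_of_subset_of_nonneg
      (fun x hx => mem_erase.2 ⟨fun h => hωB (h ▸ (mem_inter.1 hx).1), (mem_inter.1 hx).2⟩)
      (fun x _ _ => hr x)
  have hout : ∑ ω' ∈ B \ D, r ω' ≤ ∑ ω' ∈ Dᶜ, r ω' :=
    sum_le_sum_of_subset_of_nonneg (fun x hx => mem_compl.2 (mem_sdiff.1 hx).2)
      (fun x _ _ => hr x)
  have := hD ω hωD
  rw [← sum_inter_add_sum_sdiff B D, ← add_sum_erase D r hωD] at hle
  linarith

noncomputable def powBelief (idx : Ω → ℕ) (ω : Ω) : ℝ :=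
  2 ^ idx ω / ∑ ω', (2 : ℝ) ^ idx ω'

theorem sum_powBelief (idx : Ω → ℕ) (A : Finset Ω) :
    ∑ ω ∈ A, powBelief idx ω = (∑ ω ∈ A, 2 ^ idx ω : ℕ) / ∑ ω', (2 : ℝ) ^ idx ω' := by
  simp only [powBelief, ← sum_div]
  push_cast
  rfl

theorem isBelief_powBelief [Nonempty Ω] {idx : Ω → ℕ} (hidx : Injective idx) :
    IsBelief (powBelief idx) := by
  have hT : 0 < ∑ ω', (2 : ℝ) ^ idx ω' := sum_pos (fun _ _ => by positivity) univ_nonempty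
  refine ⟨fun ω => div_pos (by positivity) hT, ?_, fun A B hAB => ?_⟩
  · simp only [powBelief, ← sum_div, div_self hT.ne']
  · rw [sum_powBelief, sum_powBelief, div_left_inj' hT.ne', Nat.cast_inj,
      ← sum_image hidx.injOn, ← sum_image hidx.injOn] at hAB
    exact image_injective hidx (geomSum_injective le_rfl hAB)

theorem sum_powBelief_lt {idx : Ω → ℕ} (hidx : Injective idx) {S : Finset Ω} {ω : Ω}
    (hS : ∀ ω' ∈ S, idx ω' < idx ω) : ∑ ω' ∈ S, powBelief idx ω' < powBelief idx ω := by
  have hT : 0 < ∑ ω', (2 : ℝ) ^ idx ω' := sum_pos (fun _ _ => by positivity) ⟨ω, mem_univ ω⟩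
  rw [sum_powBelief, powBelief, div_lt_div_iff_of_pos_right hT, ← sum_image hidx.injOn]
  exact_mod_cast Nat.geomSum_lt le_rfl (by simpa using hS)

theorem exists_isBelief_isConcentratedOn_of_level [Nonempty Ω] [DecidableEq Ω] (lvl : Ω → ℕ) :
    ∃ r, IsBelief r ∧
      ∀ D : Finset Ω, (∀ ω ∈ D, ∀ ω' ∉ D, lvl ω' < lvl ω) → IsConcentratedOn r D := by
  set e := Fintype.equivFin Ω
  set idx : Ω → ℕ := fun ω => Fintype.card Ω * lvl ω + e ω
  have hlt : ∀ {ω ω'}, lvl ω' < lvl ω → idx ω' < idx ω := by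
    intro ω ω' h
    have := (e ω').isLt
    have := Nat.mul_le_mul_left (Fintype.card Ω) (Nat.succ_le_of_lt h)
    simp only [idx, Nat.mul_succ] at *
    omega
  have hidx : Injective idx := by
    intro ω ω' h
    rcases lt_trichotomy (lvl ω) (lvl ω') with h' | h' | h'
    · exact absurd h (hlt h').ne
    · exact e.injective (Fin.ext (by simpa [idx, h'] using h))
    · exact absurd h (hlt h').ne'
  exact ⟨powBelief idx, isBelief_powBelief hidx, fun D hD ω hω =>
    sum_powBelief_lt hidx fun ω' hω' => hlt (hD ω hω ω' (mem_compl.1 hω'))⟩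

theorem exists_isBelief_isConcentratedOn_of_subset [Nonempty Ω] [DecidableEq Ω]
    {E E' : Finset Ω} (h : E ⊆ E') :
    ∃ r, IsBelief r ∧ IsConcentratedOn r E ∧ IsConcentratedOn r E' := by
  obtain ⟨r, hr, hconc⟩ := exists_isBelief_isConcentratedOn_of_level
    fun ω => (if ω ∈ E then 1 else 0) + (if ω ∈ E' then 1 else 0)
  refine ⟨r, hr, hconc E fun ω hω ω' hω' => ?_, hconc E' fun ω hω ω' hω' => ?_⟩
  · simp only [hω, h hω, hω', if_true, if_false]
    split <;> omega
  · have hω'E : ω' ∉ E := fun h' => hω' (h h')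
    simp only [hω, hω', hω'E, if_true, if_false]
    split <;> omega

theorem isBelief_update {ι : Type*} [DecidableEq ι] {p : ι → Ω → ℝ} {r : Ω → ℝ}
    (hp : ∀ i, IsBelief (p i)) (hr : IsBelief r) (i : ι) : ∀ j, IsBelief (update p i r j) :=
  (forall_update_iff p (p := fun _ => IsBelief)).2 ⟨hr, fun j _ => hp j⟩

end Belief

def StrategyProof {ι Ω : Type*} [DecidableEq ι] [Fintype Ω]
    (γ : (ι → Ω → ℝ) → Finset Ω) : Prop :=
  ∀ p : ι → Ω → ℝ, (∀ i, IsBelief (p i)) →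
    ∀ (i : ι) (p' : Ω → ℝ), IsBelief p' →
      ∑ ω ∈ γ (update p i p'), p i ω ≤ ∑ ω ∈ γ p, p i ω

namespace StrategyProof

variable {ι Ω : Type*} [DecidableEq ι] [Fintype Ω] [DecidableEq Ω]
  {γ : (ι → Ω → ℝ) → Finset Ω} {p : ι → Ω → ℝ} {r : Ω → ℝ} {D : Finset Ω}

theorem subset_update (hγ : StrategyProof γ) (hp : ∀ i, IsBelief (p i)) (hr : IsBelief r)
    (hD : IsConcentratedOn r D) (hDp : D ⊆ γ p) (i : ι) : D ⊆ γ (update p i r) := by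
  have hdev := hγ (update p i r) (isBelief_update hp hr i) i (p i) (hp i)
  rw [update_idem, update_eq_self, update_self] at hdev
  exact hD.subset_of_sum_le (fun ω => (hr.1 ω).le)
    ((sum_le_sum_of_subset_of_nonneg hDp fun ω _ _ => (hr.1 ω).le).trans hdev)

theorem update_eq (hγ : StrategyProof γ) (hp : ∀ i, IsBelief (p i)) (hr : IsBelief r)
    (hD : IsConcentratedOn r D) (hDp : γ p = D) (i : ι) : γ (update p i r) = D := by
  have hsub := hγ.subset_update hp hr hD hDp.ge i
  have hdev := hγ p hp i r hr
  rw [hDp] at hdev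
  exact (hp i).2.2 _ _ <| le_antisymm hdev <|
    sum_le_sum_of_subset_of_nonneg hsub fun ω _ _ => ((hp i).1 ω).le

variable [Fintype ι]

theorem subset_const (hγ : StrategyProof γ) (hp : ∀ i, IsBelief (p i)) (hr : IsBelief r)
    (hD : IsConcentratedOn r D) (hDp : D ⊆ γ p) : D ⊆ γ fun _ => r :=
  (apply_const_of_update_closed (fun q => (∀ i, IsBelief (q i)) ∧ D ⊆ γ q) r
    (fun _ i hq => ⟨isBelief_update hq.1 hr i,
      hγ.subset_update hq.1 hr hD hq.2 i⟩) ⟨hp, hDp⟩).2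

theorem eq_const (hγ : StrategyProof γ) (hp : ∀ i, IsBelief (p i)) (hr : IsBelief r)
    (hD : IsConcentratedOn r D) (hDp : γ p = D) : (γ fun _ => r) = D :=
  (apply_const_of_update_closed (fun q => (∀ i, IsBelief (q i)) ∧ γ q = D) r
    (fun _ i hq => ⟨isBelief_update hq.1 hr i,
      hγ.update_eq hq.1 hr hD hq.2 i⟩) ⟨hp, hDp⟩).2

theorem eq_of_subset (hγ : StrategyProof γ) {E E' : Finset Ω}
    (hE : ∃ p, (∀ i, IsBelief (p i)) ∧ γ p = E) (hE' : ∃ p, (∀ i, IsBelief (p i)) ∧ γ p = E')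
    (h : E ⊆ E') : E = E' := by
  cases isEmpty_or_nonempty Ω
  · exact Subsingleton.elim _ _
  obtain ⟨p, hp, hpE⟩ := hE
  obtain ⟨q, hq, hqE'⟩ := hE'
  obtain ⟨r, hr, hrE, hrE'⟩ := exists_isBelief_isConcentratedOn_of_subset h
  refine h.antisymm ?_
  rw [← hγ.eq_const hp hr hrE hpE]
  exact hγ.subset_const hq hr hrE' hqE'.ge

end StrategyProof

/-- Any two distinct events in the range of a strategy-proof event selector are
non-nested. -/
theorem stmt3 {Ω : Type*} [Fintype Ω] [DecidableEq Ω] (m : ℕ)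
    (γ : (Fin m → (Ω → ℝ)) → Finset Ω)
    (hSP : ∀ p : Fin m → (Ω → ℝ), (∀ i, IsBelief (p i)) →
      ∀ (i : Fin m) (p' : Ω → ℝ), IsBelief p' →
        ∑ ω ∈ γ (Function.update p i p'), p i ω ≤ ∑ ω ∈ γ p, p i ω)
    (E E' : Finset Ω)
    (hE : ∃ p, (∀ i, IsBelief (p i)) ∧ γ p = E)
    (hE' : ∃ p, (∀ i, IsBelief (p i)) ∧ γ p = E')
    (hne : E ≠ E') :
    (E \ E').Nonempty ∧ (E' \ E).Nonempty :=
  ⟨sdiff_nonempty.2 fun h => hne (StrategyProof.eq_of_subset hSP hE hE' h),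
    sdiff_nonempty.2 fun h => hne (StrategyProof.eq_of_subset hSP hE' hE h).symm⟩
end

section
/- Let E₁, E₂, E₃ be three nonempty subsets of a finite set Ω that are pairwise non-nested (for each pair, each set has an element outside the other). Then there exists a strictly positive probability mass function p on E₁ ∪ E₂ ∪ E₃ such that p(E₁) > p(E₂) > p(E₃). -/
/-- Build a weight function with base 1 and three point masses, and compute its sums. -/
lemma stmt4_build {Ω : Type*} [DecidableEq Ω] (x y z : Ω) (a b c : ℝ)
    (ha : 0 ≤ a) (hb : 0 ≤ b) (hc : 0 ≤ c) :
    ∃ q : Ω → ℝ, (∀ ω, 0 < q ω) ∧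
      ∀ E : Finset Ω, ∑ ω ∈ E, q ω =
        (E.card : ℝ) + (if x ∈ E then a else 0) + (if y ∈ E then b else 0)
          + (if z ∈ E then c else 0) := by
  refine ⟨fun ω => 1 + (if ω = x then a else 0) + (if ω = y then b else 0)
      + (if ω = z then c else 0), ?_, ?_⟩
  · intro ω
    have h1 : (0:ℝ) ≤ if ω = x then a else 0 := by split <;> simp [ha]
    have h2 : (0:ℝ) ≤ if ω = y then b else 0 := by split <;> simp [hb]
    have h3 : (0:ℝ) ≤ if ω = z then c else 0 := by split <;> simp [hc]
    dsimp only
    linarith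
  · intro E
    rw [Finset.sum_add_distrib, Finset.sum_add_distrib, Finset.sum_add_distrib,
      Finset.sum_const, Finset.sum_ite_eq' E x (fun _ => a),
      Finset.sum_ite_eq' E y (fun _ => b), Finset.sum_ite_eq' E z (fun _ => c)]
    simp

/-- For three pairwise non-nested nonempty events one can find a strictly positive
belief on their union realizing any prescribed strict ordering of probabilities. -/
theorem stmt4 {Ω : Type*} [Fintype Ω] [DecidableEq Ω] (E₁ E₂ E₃ : Finset Ω)
    (h1 : E₁.Nonempty) (h2 : E₂.Nonempty) (h3 : E₃.Nonempty)
    (h12 : (E₁ \ E₂).Nonempty ∧ (E₂ \ E₁).Nonempty)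
    (h13 : (E₁ \ E₃).Nonempty ∧ (E₃ \ E₁).Nonempty)
    (h23 : (E₂ \ E₃).Nonempty ∧ (E₃ \ E₂).Nonempty) :
    ∃ p : Ω → ℝ, (∀ ω ∈ E₁ ∪ E₂ ∪ E₃, 0 < p ω) ∧ (∑ ω ∈ E₁ ∪ E₂ ∪ E₃, p ω = 1) ∧
      (∑ ω ∈ E₂, p ω) < (∑ ω ∈ E₁, p ω) ∧ (∑ ω ∈ E₃, p ω) < (∑ ω ∈ E₂, p ω) := by
  classical
  set U : Finset Ω := E₁ ∪ E₂ ∪ E₃ with hU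
  -- reduce to finding an unnormalized positive weight with the right ordering
  have key : ∀ q : Ω → ℝ, (∀ ω, 0 < q ω) →
      (∑ ω ∈ E₂, q ω) < (∑ ω ∈ E₁, q ω) → (∑ ω ∈ E₃, q ω) < (∑ ω ∈ E₂, q ω) →
      ∃ p : Ω → ℝ, (∀ ω ∈ U, 0 < p ω) ∧ (∑ ω ∈ U, p ω = 1) ∧
        (∑ ω ∈ E₂, p ω) < (∑ ω ∈ E₁, p ω) ∧ (∑ ω ∈ E₃, p ω) < (∑ ω ∈ E₂, p ω) := by
    intro q hpos hq12 hq23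
    have hUne : U.Nonempty := h1.mono (by intro x hx; simp [hU]; tauto)
    have hS : 0 < ∑ ω ∈ U, q ω := Finset.sum_pos (fun ω _ => hpos ω) hUne
    refine ⟨fun ω => q ω / ∑ ω ∈ U, q ω, ?_, ?_, ?_, ?_⟩
    · intro ω _; exact div_pos (hpos ω) hS
    · rw [← Finset.sum_div]; field_simp
    · rw [← Finset.sum_div, ← Finset.sum_div]; gcongr
    · rw [← Finset.sum_div, ← Finset.sum_div]; gcongr
  -- numeric setup
  set N : ℝ := (Fintype.card Ω : ℝ) with hN
  set K : ℝ := N + 1 with hK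
  have hN0 : 0 ≤ N := by positivity
  have hK0 : 0 ≤ K := by simp [hK]; linarith
  have hc1 : (E₁.card : ℝ) ≤ N := by rw [hN]; exact_mod_cast Finset.card_le_univ E₁
  have hc2 : (E₂.card : ℝ) ≤ N := by rw [hN]; exact_mod_cast Finset.card_le_univ E₂
  have hc3 : (E₃.card : ℝ) ≤ N := by rw [hN]; exact_mod_cast Finset.card_le_univ E₃
  have hd1 : (1:ℝ) ≤ (E₁.card : ℝ) := by exact_mod_cast Finset.card_pos.mpr h1
  have hd2 : (1:ℝ) ≤ (E₂.card : ℝ) := by exact_mod_cast Finset.card_pos.mpr h2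
  have hd3 : (1:ℝ) ≤ (E₃.card : ℝ) := by exact_mod_cast Finset.card_pos.mpr h3
  obtain ⟨v, hv⟩ := h23.1
  rw [Finset.mem_sdiff] at hv
  obtain ⟨u₁, hu₁⟩ := h12.1
  rw [Finset.mem_sdiff] at hu₁
  obtain ⟨u₂, hu₂⟩ := h13.1
  rw [Finset.mem_sdiff] at hu₂
  by_cases hvE1 : v ∈ E₁
  · -- v ∈ E₁ ∩ E₂ \ E₃ : put K at u₁, 2K at v
    obtain ⟨q, hqpos, hqsum⟩ := stmt4_build u₁ v v K (2*K) 0 hK0 (by linarith) le_rfl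
    refine key q hqpos ?_ ?_
    · rw [hqsum E₁, hqsum E₂]
      simp only [hu₁.1, hvE1, hv.1, hu₁.2, if_true, if_false]
      linarith
    · rw [hqsum E₂, hqsum E₃]
      have hb : (if u₁ ∈ E₃ then K else 0) ≤ K := by split <;> linarith
      simp only [hv.1, hv.2, hu₁.2, if_true, if_false]
      linarith
  · by_cases hu1E3 : u₁ ∈ E₃
    · by_cases hu2E2 : u₂ ∈ E₂
      · -- B3: 2K at u₁, K at v, 2K at u₂
        obtain ⟨q, hqpos, hqsum⟩ :=
          stmt4_build u₁ v u₂ (2*K) K (2*K) (by linarith) hK0 (by linarith)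
        refine key q hqpos ?_ ?_
        · rw [hqsum E₁, hqsum E₂]
          simp only [hu₁.1, hu₁.2, hv.1, hvE1, hu₂.1, hu2E2, if_true, if_false]
          linarith
        · rw [hqsum E₂, hqsum E₃]
          simp only [hu₁.2, hu1E3, hv.1, hv.2, hu2E2, hu₂.2, if_true, if_false]
          linarith
      · -- B2: 2K at u₂, K at v
        obtain ⟨q, hqpos, hqsum⟩ := stmt4_build u₂ v v (2*K) K 0 (by linarith) hK0 le_rfl
        refine key q hqpos ?_ ?_
        · rw [hqsum E₁, hqsum E₂]
          simp only [hu₂.1, hu2E2, hv.1, hvE1, if_true, if_false]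
          linarith
        · rw [hqsum E₂, hqsum E₃]
          simp only [hu2E2, hu₂.2, hv.1, hv.2, if_true, if_false]
          linarith
    · -- B1: 2K at u₁, K at v
      obtain ⟨q, hqpos, hqsum⟩ := stmt4_build u₁ v v (2*K) K 0 (by linarith) hK0 le_rfl
      refine key q hqpos ?_ ?_
      · rw [hqsum E₁, hqsum E₂]
        simp only [hu₁.1, hu₁.2, hv.1, hvE1, if_true, if_false]
        linarith
      · rw [hqsum E₂, hqsum E₃]
        simp only [hu₁.2, hu1E3, hv.1, hv.2, if_true, if_false]
        linarith
end

section
/- Let Ω̂ be a finite set and γ : P^k × P^{n−k} → Pow(Ω̂) a map on pairs of belief profiles satisfying: (A) for each i ≤ k and profile (p,q), p_i(γ(p,q)) = max over p'_i of p_i(γ((p'_i,p_{−i}),q)); and (B) for each j ≤ n−k, q_j(γ(p,q)) = min over q'_j of q_j(γ(p,(q'_j,q_{−j}))). Let Ω₁ ⊆ Ω̂ and write γ_{Ω₁}(p,q) = γ(p,q) ∩ Ω₁. Call a belief r Ω₁-dominant if min over distinct E,F ⊆ Ω₁ of |r(E) − r(F)| exceeds r(Ω̂ ∖ Ω₁);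 call a profile Ω₁-dominant if every coordinate is. If p, p' are Ω₁-dominant profiles of the first group with identical conditional distributions on Ω₁ (p_{i}(E)/p_i(Ω₁) = p'_i(E)/p'_i(Ω₁) for all E ⊆ Ω₁ and all i ≤ k), then γ_{Ω₁}(p,q) = γ_{Ω₁}(p',q) for every q. -/
/-- `r` is `Ω₁`-dominant: mass outside `Ω₁` is smaller than every probability
gap between distinct events inside `Ω₁`. -/
def Dominant {Ω : Type*} [Fintype Ω] [DecidableEq Ω] (Ω₁ : Finset Ω) (r : Ω → ℝ) : Prop :=
  ∀ E F : Finset Ω, E ⊆ Ω₁ → F ⊆ Ω₁ → E ≠ F →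
    (∑ ω ∈ Ω₁ᶜ, r ω) < |(∑ ω ∈ E, r ω) - (∑ ω ∈ F, r ω)|

lemma step9 {Ω : Type*} [Fintype Ω] [DecidableEq Ω] (Ω₁ : Finset Ω) (r r' : Ω → ℝ)
    (hr : IsBelief r) (hr' : IsBelief r') (hd : Dominant Ω₁ r) (hd' : Dominant Ω₁ r')
    (hc : ∀ E : Finset Ω, E ⊆ Ω₁ →
      (∑ ω ∈ E, r ω) / (∑ ω ∈ Ω₁, r ω) = (∑ ω ∈ E, r' ω) / (∑ ω ∈ Ω₁, r' ω))
    (A B : Finset Ω)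
    (h1 : ∑ ω ∈ B, r ω ≤ ∑ ω ∈ A, r ω)
    (h2 : ∑ ω ∈ A, r' ω ≤ ∑ ω ∈ B, r' ω) :
    A ∩ Ω₁ = B ∩ Ω₁ := by
  by_contra hne
  set E := A ∩ Ω₁ with hE
  set F := B ∩ Ω₁ with hF
  have hEsub : E ⊆ Ω₁ := Finset.inter_subset_right
  have hFsub : F ⊆ Ω₁ := Finset.inter_subset_right
  -- generic splitting fact
  have split : ∀ (s : Ω → ℝ) (C : Finset Ω), (∀ ω, 0 < s ω) →
      ∑ ω ∈ C, s ω ≤ (∑ ω ∈ C ∩ Ω₁, s ω) + ∑ ω ∈ Ω₁ᶜ, s ω ∧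
      (∑ ω ∈ C ∩ Ω₁, s ω) ≤ ∑ ω ∈ C, s ω := by
    intro s C hs
    have h := Finset.sum_inter_add_sum_sdiff C Ω₁ s
    constructor
    · have : ∑ ω ∈ C \ Ω₁, s ω ≤ ∑ ω ∈ Ω₁ᶜ, s ω := by
        apply Finset.sum_le_sum_of_subset_of_nonneg
        · intro x hx
          simp only [Finset.mem_sdiff] at hx
          simp [hx.2]
        · intro x _ _; exact (hs x).le
      linarith
    · have : 0 ≤ ∑ ω ∈ C \ Ω₁, s ω :=
        Finset.sum_nonneg fun x _ => (hs x).le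
      linarith
  -- r side: r F ≤ r E + r Ω₁ᶜ  hence r F < r E
  have key : ∀ (s : Ω → ℝ), IsBelief s → Dominant Ω₁ s →
      (∑ ω ∈ B, s ω ≤ ∑ ω ∈ A, s ω) →
      (∑ ω ∈ F, s ω) < ∑ ω ∈ E, s ω := by
    intro s hs hds h
    have h1 := split s A hs.1
    have h2 := split s B hs.1
    have hle : (∑ ω ∈ F, s ω) ≤ (∑ ω ∈ E, s ω) + ∑ ω ∈ Ω₁ᶜ, s ω := by
      rw [hE, hF]; linarith [h1.1, h1.2, h2.1, h2.2]
    have hneq : (∑ ω ∈ E, s ω) ≠ ∑ ω ∈ F, s ω := fun h => hne (hs.2.2 E F h)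
    have hdom := hds E F hEsub hFsub hne
    rcases lt_or_gt_of_ne hneq with h | h
    · exfalso
      rw [abs_of_nonpos (by linarith)] at hdom
      linarith
    · exact h
  have hr1 : (∑ ω ∈ F, r ω) < ∑ ω ∈ E, r ω := key r hr hd h1
  have hr2 : (∑ ω ∈ E, r' ω) < ∑ ω ∈ F, r' ω := by
    have : A ∩ Ω₁ ≠ B ∩ Ω₁ := hne
    -- symmetric: swap roles of A,B and E,F
    by_contra hcon
    push_neg at hcon
    -- use same key with roles swapped
    have key' : (∑ ω ∈ E, r' ω) < ∑ ω ∈ F, r' ω := by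
      have h1 := split r' A hr'.1
      have h2 := split r' B hr'.1
      have hle : (∑ ω ∈ E, r' ω) ≤ (∑ ω ∈ F, r' ω) + ∑ ω ∈ Ω₁ᶜ, r' ω := by
        rw [hE, hF]; linarith [h1.1, h1.2, h2.1, h2.2]
      have hneq : (∑ ω ∈ E, r' ω) ≠ ∑ ω ∈ F, r' ω := fun h => hne (hr'.2.2 E F h)
      have hdom := hd' E F hEsub hFsub hne
      rcases lt_or_gt_of_ne hneq with h | h
      · exact h
      · exfalso
        rw [abs_of_nonneg (by linarith)] at hdom
        linarith
    exact absurd key' (not_lt.mpr hcon)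
  -- now get contradiction from conditionals
  have hΩ₁pos : 0 < ∑ ω ∈ Ω₁, r ω := by
    rcases Finset.eq_empty_or_nonempty Ω₁ with h | h
    · exfalso; apply hne; rw [hE, hF] at *; simp [h]
    · exact Finset.sum_pos (fun x _ => hr.1 x) h
  have hΩ₁pos' : 0 < ∑ ω ∈ Ω₁, r' ω := by
    rcases Finset.eq_empty_or_nonempty Ω₁ with h | h
    · exfalso; apply hne; simp [hE, hF, h]
    · exact Finset.sum_pos (fun x _ => hr'.1 x) h
  have hcE := hc E hEsub
  have hcF := hc F hFsub
  rw [div_eq_div_iff hΩ₁pos.ne' hΩ₁pos'.ne'] at hcE hcF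
  nlinarith [mul_lt_mul_of_pos_right hr1 hΩ₁pos', mul_lt_mul_of_pos_right hr2 hΩ₁pos]

/-- Dominant-belief allocation, part (I): for `Ω₁`-dominant first-group profiles with
identical conditional distributions on `Ω₁`, the selection inside `Ω₁` coincides. -/
theorem stmt9 {Ω : Type*} [Fintype Ω] [DecidableEq Ω] (k m : ℕ)
    (γ : (Fin k → (Ω → ℝ)) → (Fin m → (Ω → ℝ)) → Finset Ω)
    (hA : ∀ p q, (∀ i, IsBelief (p i)) → (∀ j, IsBelief (q j)) →
      ∀ (i : Fin k) (p' : Ω → ℝ), IsBelief p' →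
        ∑ ω ∈ γ (Function.update p i p') q, p i ω ≤ ∑ ω ∈ γ p q, p i ω)
    (hB : ∀ p q, (∀ i, IsBelief (p i)) → (∀ j, IsBelief (q j)) →
      ∀ (j : Fin m) (q' : Ω → ℝ), IsBelief q' →
        ∑ ω ∈ γ p q, q j ω ≤ ∑ ω ∈ γ p (Function.update q j q'), q j ω)
    (Ω₁ : Finset Ω)
    (p p' : Fin k → (Ω → ℝ)) (q : Fin m → (Ω → ℝ))
    (hp : ∀ i, IsBelief (p i)) (hp' : ∀ i, IsBelief (p' i)) (hq : ∀ j, IsBelief (q j))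
    (hdom : ∀ i, Dominant Ω₁ (p i)) (hdom' : ∀ i, Dominant Ω₁ (p' i))
    (hcond : ∀ (i : Fin k) (E : Finset Ω), E ⊆ Ω₁ →
      (∑ ω ∈ E, p i ω) / (∑ ω ∈ Ω₁, p i ω) = (∑ ω ∈ E, p' i ω) / (∑ ω ∈ Ω₁, p' i ω)) :
    γ p q ∩ Ω₁ = γ p' q ∩ Ω₁ := by
  set P : Finset (Fin k) → (Fin k → (Ω → ℝ)) :=
    fun S i => if i ∈ S then p' i else p i with hP
  have hPb : ∀ S i, IsBelief (P S i) := by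
    intro S i
    by_cases h : i ∈ S <;> simp [hP, h, hp i, hp' i]
  have claim : ∀ S : Finset (Fin k), γ (P S) q ∩ Ω₁ = γ p q ∩ Ω₁ := by
    intro S
    induction S using Finset.induction_on with
    | empty =>
      have : P ∅ = p := by funext i; simp [hP]
      rw [this]
    | @insert a S ha ih =>
      set Q := Function.update (P S) a (p' a) with hQdef
      have hQ : P (insert a S) = Q := by
        funext i
        by_cases h : i = a
        · subst h; simp [hP, hQdef, Function.update_self]
        · simp [hP, hQdef, Function.update_of_ne h, h]
      have hQb : ∀ i, IsBelief (Q i) := by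
        intro i
        by_cases h : i = a
        · subst h; simpa [hQdef] using hp' i
        · simpa [hQdef, Function.update_of_ne h] using hPb S i
      have hPSa : P S a = p a := by simp [hP, ha]
      have hback : Function.update Q a (p a) = P S := by
        funext i
        by_cases h : i = a
        · subst h; simp [hQdef, hPSa]
        · simp [hQdef, Function.update_of_ne h]
      have h1 : ∑ ω ∈ γ Q q, p a ω ≤ ∑ ω ∈ γ (P S) q, p a ω := by
        have := hA (P S) q (hPb S) hq a (p' a) (hp' a)
        rwa [hPSa] at this
      have h2 : ∑ ω ∈ γ (P S) q, p' a ω ≤ ∑ ω ∈ γ Q q, p' a ω := by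
        have := hA Q q hQb hq a (p a) (hp a)
        rw [hback] at this
        rwa [show Q a = p' a by simp [hQdef]] at this
      have hstep := step9 Ω₁ (p a) (p' a) (hp a) (hp' a) (hdom a) (hdom' a)
        (fun E hE => hcond a E hE) (γ (P S) q) (γ Q q) h1 h2
      rw [hQ, ← hstep, ih]
  have hfull : P Finset.univ = p' := by funext i; simp [hP]
  have := claim Finset.univ
  rw [hfull] at this
  exact this.symm
end

section
/- Let Ω be a finite set with |Ω| ≥ 2, n ≥ 2 agents, distinct outcomes a,b, and let φ be the dyadic factor determined by a partition {E,F} of Ω into nonempty events, thresholds k̲ = k̄ = k* ∈ {1,…,n−1}, and a non-decreasing function H : ℕ × ℕ → {0,1}: φ(v,p) is the constant act b if n_a^v < k*, the constant act a if n_a^v > k*, and if n_a^v = k*, φ(v,p) yields a on E and b on F when H(η_a, η_b) = 1 and yields a on F and b on E when H(η_a, η_b) = 0, where n_a^v = |{i : v_i(a) > v_i(b)}|, η_a = |{i : v_i(a) > v_i(b) and p_i(E) > p_i(F)}|, and η_b = |{i : v_i(b) > v_i(a) and p_i(F) > p_i(E)}|. Then φ is anonymous and range-unanimous. -/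
lemma exists_belief (Ω : Type*) [Fintype Ω] [Nonempty Ω] : ∃ r : Ω → ℝ, IsBelief r := by
  classical
  set g : Ω → ℕ := fun ω => (Fintype.equivFin Ω ω : ℕ) with hg
  have hginj : Function.Injective g :=
    Fin.val_injective.comp (Fintype.equivFin Ω).injective
  set c : ℝ := ∑ ω, (2 : ℝ) ^ (g ω) with hc
  have hcpos : 0 < c := by
    apply Finset.sum_pos (fun ω _ => by positivity)
    exact Finset.univ_nonempty
  refine ⟨fun ω => (2 : ℝ) ^ (g ω) / c, fun ω => by positivity, ?_, ?_⟩
  · rw [← Finset.sum_div, div_eq_one_iff_eq hcpos.ne']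
  · intro A B hAB
    have h2 : ∑ ω ∈ A, (2 : ℝ) ^ (g ω) = ∑ ω ∈ B, (2 : ℝ) ^ (g ω) := by
      rw [← Finset.sum_div, ← Finset.sum_div] at hAB
      have := congrArg (· * c) hAB
      simpa [div_mul_cancel₀, hcpos.ne'] using this
    have h3 : ∑ ω ∈ A, 2 ^ (g ω) = ∑ ω ∈ B, 2 ^ (g ω) := by
      have := h2
      push_cast at this
      exact_mod_cast this
    have h4 : ∑ i ∈ A.image g, 2 ^ i = ∑ i ∈ B.image g, 2 ^ i := by
      rw [Finset.sum_image (fun x _ y _ h => hginj h),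
        Finset.sum_image (fun x _ y _ h => hginj h)]
      exact h3
    have h5 := Finset.geomSum_injective (le_refl 2) h4
    exact Finset.image_injective hginj h5

lemma exists_valuation {X : Type*} [Fintype X] (a b : X) (hab : a ≠ b) :
    ∃ w : X → ℝ, Function.Injective w ∧ w b < w a := by
  classical
  set g : X → ℝ := fun x => ((Fintype.equivFin X x : ℕ) : ℝ) with hg
  have hginj : Function.Injective g := by
    intro x y h
    exact (Fintype.equivFin X).injective (Fin.val_injective (Nat.cast_injective h))
  rcases lt_or_gt_of_ne (fun h => hab (hginj h)) with h | h
  · exact ⟨g ∘ Equiv.swap a b, hginj.comp (Equiv.swap a b).injective, by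
      simp [Equiv.swap_apply_left, Equiv.swap_apply_right, h]⟩
  · exact ⟨g, hginj, h⟩

/-- The dyadic factor with `k̲ = k̄ = k*` is anonymous and range-unanimous. -/
theorem stmt13 {Ω X : Type*} [Fintype Ω] [Fintype X] [DecidableEq Ω]
    (a b : X) (hab : a ≠ b) (n : ℕ) (hn : 2 ≤ n)
    (E : Finset Ω) (hE : E.Nonempty) (hEc : Eᶜ.Nonempty)
    (kstar : ℕ) (hk1 : 1 ≤ kstar) (hk2 : kstar ≤ n - 1)
    (H : ℕ → ℕ → ℕ)
    (h01 : ∀ m₁ m₂, H m₁ m₂ = 0 ∨ H m₁ m₂ = 1)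
    (hmono : ∀ m₁ m₂ m₁' m₂', m₁ ≤ m₁' → m₂ ≤ m₂' → H m₁ m₂ ≤ H m₁' m₂')
    (h00 : H 0 0 = 0) (hfull : H kstar (n - kstar) = 1)
    (φ : (Fin n → X → ℝ) → (Fin n → Ω → ℝ) → Ω → X)
    (hφ : ∀ v p ω, φ v p ω =
      if Nat.card {i : Fin n // v i b < v i a} < kstar then b
      else if kstar < Nat.card {i : Fin n // v i b < v i a} then a
      else if H (Nat.card {i : Fin n // v i b < v i a ∧ (∑ x ∈ Eᶜ, p i x) < ∑ x ∈ E, p i x})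
                (Nat.card {i : Fin n // v i a < v i b ∧ (∑ x ∈ E, p i x) < ∑ x ∈ Eᶜ, p i x}) = 1
        then (if ω ∈ E then a else b) else (if ω ∈ E then b else a)) :
    -- anonymity
    (∀ (v : Fin n → X → ℝ) (p : Fin n → Ω → ℝ), (∀ i, Function.Injective (v i)) →
        (∀ i, IsBelief (p i)) → ∀ σ : Equiv.Perm (Fin n),
        φ (fun i => v (σ i)) (fun i => p (σ i)) = φ v p) ∧
    -- range-unanimity
    (∀ f : Ω → X,
      (∀ ω, ∃ (w : Fin n → X → ℝ) (q : Fin n → Ω → ℝ),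
        (∀ j, Function.Injective (w j)) ∧ (∀ j, IsBelief (q j)) ∧ φ w q ω = f ω) →
      ∀ (v : Fin n → X → ℝ) (p : Fin n → Ω → ℝ),
        (∀ i, Function.Injective (v i)) → (∀ i, IsBelief (p i)) →
        (∀ (i : Fin n) (ω : Ω) (x : X),
          (∃ (w : Fin n → X → ℝ) (q : Fin n → Ω → ℝ),
            (∀ j, Function.Injective (w j)) ∧ (∀ j, IsBelief (q j)) ∧ φ w q ω = x) →
          x ≠ f ω → v i x < v i (f ω)) →
        φ v p = f) := by
  have hkn : kstar < n := by omega
  -- generic card lemmas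
  have cardAll : ∀ (P : Fin n → Prop), (∀ i, P i) → Nat.card {i : Fin n // P i} = n := by
    intro P hP
    rw [Nat.card_congr (Equiv.subtypeUnivEquiv hP)]
    simp
  have cardNone : ∀ (P : Fin n → Prop), (∀ i, ¬ P i) → Nat.card {i : Fin n // P i} = 0 := by
    intro P hP
    have : IsEmpty {i : Fin n // P i} := ⟨fun x => hP x.1 x.2⟩
    exact Nat.card_of_isEmpty
  constructor
  · -- anonymity
    intro v p _ _ σ
    funext ω
    rw [hφ, hφ]
    have e1 : Nat.card {i : Fin n // v (σ i) b < v (σ i) a}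
        = Nat.card {i : Fin n // v i b < v i a} :=
      Nat.card_congr (Equiv.subtypeEquiv σ (fun i => Iff.rfl))
    have e2 : Nat.card {i : Fin n // v (σ i) b < v (σ i) a ∧
          (∑ x ∈ Eᶜ, p (σ i) x) < ∑ x ∈ E, p (σ i) x}
        = Nat.card {i : Fin n // v i b < v i a ∧ (∑ x ∈ Eᶜ, p i x) < ∑ x ∈ E, p i x} :=
      Nat.card_congr (Equiv.subtypeEquiv σ (fun i => Iff.rfl))
    have e3 : Nat.card {i : Fin n // v (σ i) a < v (σ i) b ∧
          (∑ x ∈ E, p (σ i) x) < ∑ x ∈ Eᶜ, p (σ i) x}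
        = Nat.card {i : Fin n // v i a < v i b ∧ (∑ x ∈ E, p i x) < ∑ x ∈ Eᶜ, p i x} :=
      Nat.card_congr (Equiv.subtypeEquiv σ (fun i => Iff.rfl))
    rw [e1, e2, e3]
  · -- range-unanimity
    intro f hach v p hv hp hpref
    have : Nonempty Ω := ⟨hE.choose⟩
    obtain ⟨r, hr⟩ := exists_belief Ω
    obtain ⟨wa, hwa, hwalt⟩ := exists_valuation a b hab
    obtain ⟨wb, hwb, hwblt⟩ := exists_valuation b a hab.symm
    -- a is achievable at every state
    have hacha : ∀ ω : Ω, ∃ (w : Fin n → X → ℝ) (q : Fin n → Ω → ℝ),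
        (∀ j, Function.Injective (w j)) ∧ (∀ j, IsBelief (q j)) ∧ φ w q ω = a := by
      intro ω
      refine ⟨fun _ => wa, fun _ => r, fun _ => hwa, fun _ => hr, ?_⟩
      rw [hφ]
      rw [cardAll _ (fun i => hwalt)]
      rw [if_neg (by omega), if_pos hkn]
    -- b is achievable at every state
    have hachb : ∀ ω : Ω, ∃ (w : Fin n → X → ℝ) (q : Fin n → Ω → ℝ),
        (∀ j, Function.Injective (w j)) ∧ (∀ j, IsBelief (q j)) ∧ φ w q ω = b := by
      intro ω
      refine ⟨fun _ => wb, fun _ => r, fun _ => hwb, fun _ => hr, ?_⟩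
      rw [hφ]
      rw [cardNone (fun i => wb b < wb a) (fun i => not_lt.mpr hwblt.le)]
      rw [if_pos (by omega)]
    have hfab : ∀ ω, f ω = a ∨ f ω = b := by
      intro ω
      obtain ⟨w, q, _, _, hw⟩ := hach ω
      rw [hφ] at hw
      split_ifs at hw with h1 h2 h3 <;>
        first | exact Or.inr hw.symm | exact Or.inl hw.symm
    by_cases hA : ∀ ω, f ω = a
    · have hall : ∀ i, v i b < v i a := by
        intro i
        have := hpref i hE.choose b (hachb hE.choose) (by rw [hA]; exact hab.symm)
        rwa [hA] at this
      funext ω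
      rw [hφ, hA ω, cardAll _ hall, if_neg (by omega), if_pos hkn]
    by_cases hB : ∀ ω, f ω = b
    · have hall : ∀ i, v i a < v i b := by
        intro i
        have := hpref i hE.choose a (hacha hE.choose) (by rw [hB]; exact hab)
        rwa [hB] at this
      funext ω
      rw [hφ, hB ω,
        cardNone (fun i => v i b < v i a) (fun i => not_lt.mpr (hall i).le),
        if_pos (by omega)]
    · exfalso
      push_neg at hA hB
      obtain ⟨ω1, hω1⟩ := hA
      obtain ⟨ω2, hω2⟩ := hB
      have hf1 : f ω1 = b := (hfab ω1).resolve_left hω1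
      have hf2 : f ω2 = a := (hfab ω2).resolve_right hω2
      have i0 : Fin n := ⟨0, by omega⟩
      have h1 : v i0 a < v i0 b := by
        have := hpref i0 ω1 a (hacha ω1) (by rw [hf1]; exact hab)
        rwa [hf1] at this
      have h2 : v i0 b < v i0 a := by
        have := hpref i0 ω2 b (hachb ω2) (by rw [hf2]; exact hab.symm)
        rwa [hf2] at this
      exact absurd h1 (not_lt.mpr h2.le)
end

section
/- Let Ω = {ω₁, ω₂, ω₃}, n ≥ 3 agents, distinct outcomes a,b. Define φ(v,p) ∈ {a,b}^Ω by: if n_a^v = 0 select the constant act b; if n_a^v ≥ 3 select the constant act a; if n_a^v = 1 select (a on ω₁, b on ω₂, b on ω₃) when at least one b-supporter j has p_j(ω₂) > p_j(ω₁), and (a on ω₂, b on ω₁, b on ω₃) otherwise; if n_a^v = 2 select (a on ω₁ω₂, b on ω₃) when at least one a-supporter i has p_i(ω₂) > p_i(ω₃), and (a on ω₁ω₃, b on ω₂) otherwise. (Here n_a^v = |{i : v_i(a) > v_i(b)}|, a-supporters are agents with v_i(a) > v_i(b), b-supporters the rest.) Then φ is strategy-proof. -/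
/-- An SEU preference: injective valuation, strictly positive normalized
event-injective belief, and no indifference between distinct acts. -/
def ValidPref {Ω X : Type*} [Fintype Ω] [Fintype X] (u : X → ℝ) (r : Ω → ℝ) : Prop :=
  Function.Injective u ∧ (∀ ω, 0 < r ω) ∧ (∑ ω, r ω = 1) ∧
  (∀ A B : Finset Ω, (∑ ω ∈ A, r ω) = (∑ ω ∈ B, r ω) → A = B) ∧
  ∀ f g : Ω → X, f ≠ g → (∑ ω, r ω * u (f ω)) ≠ (∑ ω, r ω * u (g ω))

set_option maxHeartbeats 2000000 in
/-- The three-state iso-filtering factor of Example 2 is strategy-proof. -/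
theorem stmt14 {Ω X : Type*} [Fintype Ω] [Fintype X] [DecidableEq Ω]
    (a b : X) (hab : a ≠ b) (n : ℕ) (hn : 3 ≤ n)
    (ω₁ ω₂ ω₃ : Ω) (h12 : ω₁ ≠ ω₂) (h13 : ω₁ ≠ ω₃) (h23 : ω₂ ≠ ω₃)
    (hcov : ∀ ω : Ω, ω = ω₁ ∨ ω = ω₂ ∨ ω = ω₃)
    (φ : (Fin n → X → ℝ) → (Fin n → Ω → ℝ) → Ω → X)
    (h0 : ∀ v p, Nat.card {i : Fin n // v i b < v i a} = 0 → φ v p = fun _ => b)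
    (h3 : ∀ v p, 3 ≤ Nat.card {i : Fin n // v i b < v i a} → φ v p = fun _ => a)
    (h1a : ∀ v p, Nat.card {i : Fin n // v i b < v i a} = 1 →
      (∃ j, v j a < v j b ∧ p j ω₁ < p j ω₂) →
      φ v p = fun ω => if ω = ω₁ then a else b)
    (h1b : ∀ v p, Nat.card {i : Fin n // v i b < v i a} = 1 →
      ¬(∃ j, v j a < v j b ∧ p j ω₁ < p j ω₂) →
      φ v p = fun ω => if ω = ω₂ then a else b)
    (h2a : ∀ v p, Nat.card {i : Fin n // v i b < v i a} = 2 →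
      (∃ i, v i b < v i a ∧ p i ω₃ < p i ω₂) →
      φ v p = fun ω => if ω = ω₃ then b else a)
    (h2b : ∀ v p, Nat.card {i : Fin n // v i b < v i a} = 2 →
      ¬(∃ i, v i b < v i a ∧ p i ω₃ < p i ω₂) →
      φ v p = fun ω => if ω = ω₂ then b else a)
    (v : Fin n → X → ℝ) (p : Fin n → Ω → ℝ) (hvp : ∀ i, ValidPref (v i) (p i))
    (i : Fin n) (v' : X → ℝ) (p' : Ω → ℝ) (hv'p' : ValidPref v' p') :
    ∑ ω, p i ω * v i (φ (Function.update v i v') (Function.update p i p') ω)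
      ≤ ∑ ω, p i ω * v i (φ v p ω) := by
  classical
  obtain ⟨hinj, hpos, -, hev, -⟩ := hvp i
  have hvab : v i a ≠ v i b := fun h => hab (hinj h)
  have hv'ab : v' a ≠ v' b := fun h => hab (hv'p'.1 h)
  have e21 : ω₂ ≠ ω₁ := h12.symm
  have e31 : ω₃ ≠ ω₁ := h13.symm
  have e32 : ω₃ ≠ ω₂ := h23.symm
  have hp1 : 0 < p i ω₁ := hpos ω₁
  have hp2 : 0 < p i ω₂ := hpos ω₂
  have hp3 : 0 < p i ω₃ := hpos ω₃
  have hp12 : p i ω₁ ≠ p i ω₂ := by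
    intro h
    have h2 := hev {ω₁} {ω₂} (by simpa using h)
    exact h12 (by simpa using h2)
  have hp23 : p i ω₂ ≠ p i ω₃ := by
    intro h
    have h2 := hev {ω₂} {ω₃} (by simpa using h)
    exact h23 (by simpa using h2)
  have hU : (Finset.univ : Finset Ω) = {ω₁, ω₂, ω₃} := by
    ext ω
    simp only [Finset.mem_univ, true_iff, Finset.mem_insert, Finset.mem_singleton]
    exact hcov ω
  have key : ∀ f : Ω → X, ∑ ω, p i ω * v i (f ω)
      = p i ω₁ * v i (f ω₁) + p i ω₂ * v i (f ω₂) + p i ω₃ * v i (f ω₃) := by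
    intro f
    rw [hU, Finset.sum_insert (by simp [h12, h13]),
      Finset.sum_insert (by simp [h23]), Finset.sum_singleton]
    ring
  set vv := Function.update v i v' with hvv
  set pp := Function.update p i p' with hpp
  have hvvj : ∀ j, j ≠ i → vv j = v j := by
    intro j hj; rw [hvv]; exact Function.update_of_ne hj _ _
  have hppj : ∀ j, j ≠ i → pp j = p j := by
    intro j hj; rw [hpp]; exact Function.update_of_ne hj _ _
  have hvvi : vv i = v' := by rw [hvv]; exact Function.update_self _ _ _
  set S : Finset (Fin n) := Finset.univ.filter (fun j => v j b < v j a) with hSdef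
  set T : Finset (Fin n) := Finset.univ.filter (fun j => vv j b < vv j a) with hTdef
  have hcardS : Nat.card {j : Fin n // v j b < v j a} = S.card := by
    rw [Nat.card_eq_fintype_card, Fintype.card_subtype]
  have hcardT : Nat.card {j : Fin n // vv j b < vv j a} = T.card := by
    rw [Nat.card_eq_fintype_card, Fintype.card_subtype]
  have herase : T.erase i = S.erase i := by
    ext j
    simp only [Finset.mem_erase, hSdef, hTdef, Finset.mem_filter, Finset.mem_univ, true_and,
      and_congr_right_iff]
    intro hj
    rw [hvvj j hj]
  have hScard : S.card = (S.erase i).card + (if v i b < v i a then 1 else 0) := by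
    by_cases h : v i b < v i a
    · rw [if_pos h]
      exact (Finset.card_erase_add_one (by simp [hSdef, h])).symm
    · rw [if_neg h, add_zero, Finset.erase_eq_of_notMem (by simp [hSdef, h])]
  have hTcard : T.card = (S.erase i).card + (if v' b < v' a then 1 else 0) := by
    rw [← herase]
    by_cases h : v' b < v' a
    · rw [if_pos h]
      exact (Finset.card_erase_add_one (by simp [hTdef, hvvi, h])).symm
    · rw [if_neg h, add_zero, Finset.erase_eq_of_notMem (by simp [hTdef, hvvi, h])]
  obtain ⟨m, hm⟩ : ∃ m, (S.erase i).card = m := ⟨_, rfl⟩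
  rw [hm] at hScard hTcard
  clear hm
  by_cases hiA : v i b < v i a
  · have hvd : (0:ℝ) < v i a - v i b := sub_pos.mpr hiA
    by_cases hiA' : v' b < v' a
    · -- reported side stays a: counts both m+1
      rcases m with _ | _ | _ | m
      · -- counts 1: identical outcomes
        have hNt : Nat.card {j : Fin n // v j b < v j a} = 1 := by
          rw [hcardS, hScard]; simp [hiA]
        have hNm : Nat.card {j : Fin n // vv j b < vv j a} = 1 := by
          rw [hcardT, hTcard]; simp [hiA']
        have hiff : (∃ j, v j a < v j b ∧ p j ω₁ < p j ω₂) ↔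
            (∃ j, vv j a < vv j b ∧ pp j ω₁ < pp j ω₂) := by
          constructor
          · rintro ⟨j, h1, h2⟩
            have hj : j ≠ i := by rintro rfl; exact absurd h1 (lt_asymm hiA)
            exact ⟨j, by rwa [hvvj j hj], by rwa [hppj j hj]⟩
          · rintro ⟨j, h1, h2⟩
            have hj : j ≠ i := by rintro rfl; rw [hvvi] at h1; exact absurd h1 (lt_asymm hiA')
            exact ⟨j, by rwa [hvvj j hj] at h1, by rwa [hppj j hj] at h2⟩
        by_cases hC : ∃ j, v j a < v j b ∧ p j ω₁ < p j ω₂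
        · rw [h1a v p hNt hC, h1a vv pp hNm (hiff.mp hC)]
        · rw [h1b v p hNt hC, h1b vv pp hNm (fun h => hC (hiff.mpr h))]
      · -- counts 2
        have hNt : Nat.card {j : Fin n // v j b < v j a} = 2 := by
          rw [hcardS, hScard]; simp [hiA]
        have hNm : Nat.card {j : Fin n // vv j b < vv j a} = 2 := by
          rw [hcardT, hTcard]; simp [hiA']
        by_cases hC : ∃ j, v j b < v j a ∧ p j ω₃ < p j ω₂
        · by_cases hC' : ∃ j, vv j b < vv j a ∧ pp j ω₃ < pp j ω₂
          · rw [h2a v p hNt hC, h2a vv pp hNm hC']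
          · have hp32 : p i ω₃ < p i ω₂ := by
              obtain ⟨j, h1, h2⟩ := hC
              by_cases hj : j = i
              · subst hj; exact h2
              · exact absurd ⟨j, by rwa [hvvj j hj], by rwa [hppj j hj]⟩ hC'
            rw [h2a v p hNt hC, h2b vv pp hNm hC', key, key]
            simp [h12, h13, h23, e21, e31, e32]
            nlinarith [mul_pos (sub_pos.mpr hp32) hvd]
        · have hp23' : p i ω₂ < p i ω₃ :=
            lt_of_le_of_ne (not_lt.mp fun h => hC ⟨i, hiA, h⟩) hp23
          by_cases hC' : ∃ j, vv j b < vv j a ∧ pp j ω₃ < pp j ω₂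
          · rw [h2b v p hNt hC, h2a vv pp hNm hC', key, key]
            simp [h12, h13, h23, e21, e31, e32]
            nlinarith [mul_pos (sub_pos.mpr hp23') hvd]
          · rw [h2b v p hNt hC, h2b vv pp hNm hC']
      · -- counts 3
        rw [h3 v p (by rw [hcardS, hScard]; split_ifs <;> omega),
          h3 vv pp (by rw [hcardT, hTcard]; split_ifs <;> omega)]
      · -- counts ≥ 4
        rw [h3 v p (by rw [hcardS, hScard]; split_ifs <;> omega),
          h3 vv pp (by rw [hcardT, hTcard]; split_ifs <;> omega)]
    · -- true a-side, reported b-side: truth m+1, misreport m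
      rcases m with _ | _ | _ | m
      · -- truth 1, misreport 0 (const b)
        have hNt : Nat.card {j : Fin n // v j b < v j a} = 1 := by
          rw [hcardS, hScard]; simp [hiA]
        have hNm : Nat.card {j : Fin n // vv j b < vv j a} = 0 := by
          rw [hcardT, hTcard]; simp [hiA']
        have hmis := h0 vv pp hNm
        by_cases hC : ∃ j, v j a < v j b ∧ p j ω₁ < p j ω₂
        · rw [h1a v p hNt hC, hmis, key, key]
          simp [h12, h13, h23, e21, e31, e32]
          nlinarith [mul_pos hp1 hvd]
        · rw [h1b v p hNt hC, hmis, key, key]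
          simp [h12, h13, h23, e21, e31, e32]
          nlinarith [mul_pos hp2 hvd]
      · -- truth 2, misreport 1
        have hNt : Nat.card {j : Fin n // v j b < v j a} = 2 := by
          rw [hcardS, hScard]; simp [hiA]
        have hNm : Nat.card {j : Fin n // vv j b < vv j a} = 1 := by
          rw [hcardT, hTcard]; simp [hiA']
        by_cases hC' : ∃ j, vv j a < vv j b ∧ pp j ω₁ < pp j ω₂
        · have hmis := h1a vv pp hNm hC'
          by_cases hC : ∃ j, v j b < v j a ∧ p j ω₃ < p j ω₂
          · rw [h2a v p hNt hC, hmis, key, key]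
            simp [h12, h13, h23, e21, e31, e32]
            nlinarith [mul_pos hp2 hvd]
          · rw [h2b v p hNt hC, hmis, key, key]
            simp [h12, h13, h23, e21, e31, e32]
            nlinarith [mul_pos hp3 hvd]
        · have hmis := h1b vv pp hNm hC'
          by_cases hC : ∃ j, v j b < v j a ∧ p j ω₃ < p j ω₂
          · rw [h2a v p hNt hC, hmis, key, key]
            simp [h12, h13, h23, e21, e31, e32]
            nlinarith [mul_pos hp1 hvd]
          · have hp23' : p i ω₂ < p i ω₃ :=
              lt_of_le_of_ne (not_lt.mp fun h => hC ⟨i, hiA, h⟩) hp23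
            rw [h2b v p hNt hC, hmis, key, key]
            simp [h12, h13, h23, e21, e31, e32]
            nlinarith [mul_pos (sub_pos.mpr hp23') hvd, mul_pos hp1 hvd]
      · -- truth 3 (const a), misreport 2
        have ht := h3 v p (by rw [hcardS, hScard]; split_ifs <;> omega)
        have hNm : Nat.card {j : Fin n // vv j b < vv j a} = 2 := by
          rw [hcardT, hTcard]; simp [hiA']
        by_cases hC' : ∃ j, vv j b < vv j a ∧ pp j ω₃ < pp j ω₂
        · rw [ht, h2a vv pp hNm hC', key, key]
          simp [h12, h13, h23, e21, e31, e32]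
          nlinarith [mul_pos hp3 hvd]
        · rw [ht, h2b vv pp hNm hC', key, key]
          simp [h12, h13, h23, e21, e31, e32]
          nlinarith [mul_pos hp2 hvd]
      · -- both ≥ 3
        rw [h3 v p (by rw [hcardS, hScard]; split_ifs <;> omega),
          h3 vv pp (by rw [hcardT, hTcard]; split_ifs <;> omega)]
  · -- i is truly a b-supporter
    have hba : v i a < v i b := lt_of_le_of_ne (not_lt.mp hiA) hvab
    have hvd : (0:ℝ) < v i b - v i a := sub_pos.mpr hba
    by_cases hiA' : v' b < v' a
    · -- reported a-side: truth m, misreport m+1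
      rcases m with _ | _ | _ | m
      · -- truth 0 (const b), misreport 1
        have ht := h0 v p (by rw [hcardS, hScard]; simp [hiA])
        have hNm : Nat.card {j : Fin n // vv j b < vv j a} = 1 := by
          rw [hcardT, hTcard]; simp [hiA, hiA']
        by_cases hC' : ∃ j, vv j a < vv j b ∧ pp j ω₁ < pp j ω₂
        · rw [ht, h1a vv pp hNm hC', key, key]
          simp [h12, h13, h23, e21, e31, e32]
          nlinarith [mul_pos hp1 hvd]
        · rw [ht, h1b vv pp hNm hC', key, key]
          simp [h12, h13, h23, e21, e31, e32]
          nlinarith [mul_pos hp2 hvd]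
      · -- truth 1, misreport 2
        have hNt : Nat.card {j : Fin n // v j b < v j a} = 1 := by
          rw [hcardS, hScard]; simp [hiA]
        have hNm : Nat.card {j : Fin n // vv j b < vv j a} = 2 := by
          rw [hcardT, hTcard]; simp [hiA']
        by_cases hC : ∃ j, v j a < v j b ∧ p j ω₁ < p j ω₂
        · have ht := h1a v p hNt hC
          by_cases hC' : ∃ j, vv j b < vv j a ∧ pp j ω₃ < pp j ω₂
          · rw [ht, h2a vv pp hNm hC', key, key]
            simp [h12, h13, h23, e21, e31, e32]
            nlinarith [mul_pos hp2 hvd]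
          · rw [ht, h2b vv pp hNm hC', key, key]
            simp [h12, h13, h23, e21, e31, e32]
            nlinarith [mul_pos hp3 hvd]
        · have ht := h1b v p hNt hC
          have hp21 : p i ω₂ < p i ω₁ :=
            lt_of_le_of_ne (not_lt.mp fun h => hC ⟨i, hba, h⟩) (Ne.symm hp12)
          by_cases hC' : ∃ j, vv j b < vv j a ∧ pp j ω₃ < pp j ω₂
          · rw [ht, h2a vv pp hNm hC', key, key]
            simp [h12, h13, h23, e21, e31, e32]
            nlinarith [mul_pos hp1 hvd]
          · rw [ht, h2b vv pp hNm hC', key, key]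
            simp [h12, h13, h23, e21, e31, e32]
            nlinarith [mul_pos (sub_pos.mpr hp21) hvd, mul_pos hp3 hvd]
      · -- truth 2, misreport 3 (const a)
        have hNt : Nat.card {j : Fin n // v j b < v j a} = 2 := by
          rw [hcardS, hScard]; simp [hiA]
        have hmis := h3 vv pp (by rw [hcardT, hTcard]; split_ifs <;> omega)
        by_cases hC : ∃ j, v j b < v j a ∧ p j ω₃ < p j ω₂
        · rw [hmis, h2a v p hNt hC, key, key]
          simp [h12, h13, h23, e21, e31, e32]
          nlinarith [mul_pos hp3 hvd]
        · rw [hmis, h2b v p hNt hC, key, key]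
          simp [h12, h13, h23, e21, e31, e32]
          nlinarith [mul_pos hp2 hvd]
      · -- both ≥ 3
        rw [h3 v p (by rw [hcardS, hScard]; split_ifs <;> omega),
          h3 vv pp (by rw [hcardT, hTcard]; split_ifs <;> omega)]
    · -- both b-side: counts both m
      rcases m with _ | _ | _ | m
      · -- counts 0
        rw [h0 v p (by rw [hcardS, hScard]; simp [hiA]),
          h0 vv pp (by rw [hcardT, hTcard]; simp [hiA'])]
      · -- counts 1
        have hNt : Nat.card {j : Fin n // v j b < v j a} = 1 := by
          rw [hcardS, hScard]; simp [hiA]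
        have hNm : Nat.card {j : Fin n // vv j b < vv j a} = 1 := by
          rw [hcardT, hTcard]; simp [hiA']
        by_cases hpi : p i ω₁ < p i ω₂
        · have ht := h1a v p hNt ⟨i, hba, hpi⟩
          by_cases hC' : ∃ j, vv j a < vv j b ∧ pp j ω₁ < pp j ω₂
          · rw [ht, h1a vv pp hNm hC']
          · rw [ht, h1b vv pp hNm hC', key, key]
            simp [h12, h13, h23, e21, e31, e32]
            nlinarith [mul_pos (sub_pos.mpr hpi) hvd]
        · have hp21 : p i ω₂ < p i ω₁ :=
            lt_of_le_of_ne (not_lt.mp hpi) (Ne.symm hp12)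
          by_cases hC : ∃ j, v j a < v j b ∧ p j ω₁ < p j ω₂
          · have hC' : ∃ j, vv j a < vv j b ∧ pp j ω₁ < pp j ω₂ := by
              obtain ⟨j, h1, h2⟩ := hC
              have hj : j ≠ i := by rintro rfl; exact hpi h2
              exact ⟨j, by rwa [hvvj j hj], by rwa [hppj j hj]⟩
            rw [h1a v p hNt hC, h1a vv pp hNm hC']
          · have ht := h1b v p hNt hC
            by_cases hC' : ∃ j, vv j a < vv j b ∧ pp j ω₁ < pp j ω₂
            · rw [ht, h1a vv pp hNm hC', key, key]
              simp [h12, h13, h23, e21, e31, e32]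
              nlinarith [mul_pos (sub_pos.mpr hp21) hvd]
            · rw [ht, h1b vv pp hNm hC']
      · -- counts 2: condition invariant
        have hNt : Nat.card {j : Fin n // v j b < v j a} = 2 := by
          rw [hcardS, hScard]; simp [hiA]
        have hNm : Nat.card {j : Fin n // vv j b < vv j a} = 2 := by
          rw [hcardT, hTcard]; simp [hiA']
        have hiff : (∃ j, v j b < v j a ∧ p j ω₃ < p j ω₂) ↔
            (∃ j, vv j b < vv j a ∧ pp j ω₃ < pp j ω₂) := by
          constructor
          · rintro ⟨j, h1, h2⟩
            have hj : j ≠ i := by rintro rfl; exact hiA h1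
            exact ⟨j, by rwa [hvvj j hj], by rwa [hppj j hj]⟩
          · rintro ⟨j, h1, h2⟩
            have hj : j ≠ i := by rintro rfl; rw [hvvi] at h1; exact hiA' h1
            exact ⟨j, by rwa [hvvj j hj] at h1, by rwa [hppj j hj] at h2⟩
        by_cases hC : ∃ j, v j b < v j a ∧ p j ω₃ < p j ω₂
        · rw [h2a v p hNt hC, h2a vv pp hNm (hiff.mp hC)]
        · rw [h2b v p hNt hC, h2b vv pp hNm (fun h => hC (hiff.mpr h))]
      · -- both ≥ 3
        rw [h3 v p (by rw [hcardS, hScard]; split_ifs <;> omega),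
          h3 vv pp (by rw [hcardT, hTcard]; split_ifs <;> omega)]
end

section
/- Let Ω be a finite set and m ≥ 2. Suppose f : P^m → Pow(Ω) is an m-agent event selector that is strategy-proof (p_i(f(p)) ≥ p_i(f(p'_i, p_{−i})) for all profiles p, agents i, and deviations p'_i) and whose range contains three events E₁, E₂, E₃ with the property that for each of the six strict orderings of {E₁,E₂,E₃} there is a belief π with π(E_{σ(1)}) > π(E_{σ(2)}) > π(E_{σ(3)}) > π(E) for every other event E in the range of f. If additionally whenever some agent's belief ranks one of E₁,E₂,E₃ strictly above all other range events, f selects an element of {E₁,E₂,E₃} when all agents report such beliefs, then f restricted to profiles of these six beliefs induces a surjective strategy-proof social choice function from orderings of a 3-element set, and hence (by the Gibbard–Satterthwaite theorem) f is not anonymous. -/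
open Multiset

theorem exists_perm_comp_eq_of_map_eq {ι α : Type*} [Fintype ι] [DecidableEq α] {L L' : ι → α}
    (h : Finset.univ.val.map L = Finset.univ.val.map L') : ∃ σ : Equiv.Perm ι, L ∘ σ = L' := by
  have hcard : ∀ a, Fintype.card {i // L' i = a} = Fintype.card {i // L i = a} := fun a => by
    have := congrArg (count a) h
    rw [count_map, count_map] at this
    simp only [Fintype.card_subtype, Finset.card_def, Finset.filter_val, eq_comm (a := a)] at this ⊢
    exact this.symm
  exact ⟨Equiv.ofFiberEquiv fun a => Fintype.equivOfCardEq (hcard a),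
    funext (Equiv.ofFiberEquiv_map _)⟩

theorem exists_univ_map_eq {α : Type*} {k : ℕ} (s : Multiset α) (hk : card s = k) :
    ∃ L : Fin k → α, Finset.univ.val.map L = s := by
  subst hk
  exact Quot.inductionOn s fun l =>
    ⟨l.get, (Fin.univ_val_map _).trans (congrArg _ (List.ofFn_get l))⟩

/- A ranking `σ : Equiv.Perm (Fin n)` lists the alternatives from best, `σ 0`, to worst;
`σ.symm v` is the rank of `v`. -/

def IsMonotonicTransform {n : ℕ} (v : Fin n) (ρ τ : Equiv.Perm (Fin n)) : Prop :=
  ∀ w, ρ.symm v < ρ.symm w → τ.symm v < τ.symm w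

instance {n : ℕ} (v : Fin n) (ρ τ : Equiv.Perm (Fin n)) :
    Decidable (IsMonotonicTransform v ρ τ) :=
  inferInstanceAs (Decidable (∀ w, ρ.symm v < ρ.symm w → τ.symm v < τ.symm w))

theorem isMonotonicTransform_top {n : ℕ} [NeZero n] (ρ τ : Equiv.Perm (Fin n)) :
    IsMonotonicTransform (τ 0) ρ τ := fun w hw => by
  rw [Equiv.symm_apply_apply, Fin.pos_iff_ne_zero, Ne, Equiv.symm_apply_eq]
  rintro rfl
  exact hw.false

/-- Anonymity is built in by reading a profile as the multiset of reported rankings; values on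
multisets of size other than `m` play no role. -/
structure AnonymousRule (n m : ℕ) [NeZero n] where
  choice : Multiset (Equiv.Perm (Fin n)) → Fin n
  strategyProof : ∀ (s : Multiset (Equiv.Perm (Fin n))) (ρ τ : Equiv.Perm (Fin n)),
    card s + 1 = m → ρ.symm (choice (ρ ::ₘ s)) ≤ ρ.symm (choice (τ ::ₘ s))
  unanimous : ∀ σ, choice (replicate m σ) = σ 0

namespace AnonymousRule

variable {n m : ℕ} [NeZero n] (R : AnonymousRule n m)

theorem choice_cons_of_isMonotonicTransform {s : Multiset (Equiv.Perm (Fin n))}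
    {ρ τ : Equiv.Perm (Fin n)} {v : Fin n} (hs : card s + 1 = m)
    (hτ : IsMonotonicTransform v ρ τ) (hv : R.choice (ρ ::ₘ s) = v) : R.choice (τ ::ₘ s) = v := by
  subst hv
  by_contra hne
  have hρ := R.strategyProof s ρ τ hs
  have hτ' := R.strategyProof s τ ρ hs
  exact hτ'.not_gt (hτ _ (hρ.lt_of_ne fun h => hne (ρ.symm.injective h).symm))

theorem choice_add_of_forall_isMonotonicTransform {τ : Equiv.Perm (Fin n)} {v : Fin n}
    {s r : Multiset (Equiv.Perm (Fin n))} (hsr : card s + card r = m)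
    (hτ : ∀ ρ ∈ s, IsMonotonicTransform v ρ τ) (hv : R.choice (s + r) = v) :
    R.choice (replicate (card s) τ + r) = v := by
  induction s using Multiset.induction_on generalizing r with
  | empty => simpa using hv
  | cons ρ s ih =>
    have hρ : R.choice (τ ::ₘ (s + r)) = v :=
      R.choice_cons_of_isMonotonicTransform (by simpa [add_right_comm] using hsr)
        (hτ ρ (mem_cons_self ρ s)) (by simpa using hv)
    have := ih (r := τ ::ₘ r) (by simp only [card_cons] at hsr ⊢; omega)
      (fun ρ' h => hτ ρ' (mem_cons_of_mem h)) (by simpa using hρ)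
    simpa [replicate_succ] using this

theorem choice_replicate_add {c : ℕ} {ρ τ : Equiv.Perm (Fin n)} {v : Fin n}
    {r : Multiset (Equiv.Perm (Fin n))} (hcr : c + card r = m)
    (hτ : IsMonotonicTransform v ρ τ) (hv : R.choice (replicate c ρ + r) = v) :
    R.choice (replicate c τ + r) = v := by
  simpa using R.choice_add_of_forall_isMonotonicTransform (by simpa using hcr)
    (fun ρ' h => eq_of_mem_replicate h ▸ hτ) hv

theorem choice_ne_of_forall_isMonotonicTransform {s : Multiset (Equiv.Perm (Fin n))}
    {τ : Equiv.Perm (Fin n)} {v : Fin n} (hs : card s = m)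
    (hτ : ∀ ρ ∈ s, IsMonotonicTransform v ρ τ) (hv : τ 0 ≠ v) : R.choice s ≠ v := fun h =>
  hv <| by
    simpa [hs, R.unanimous] using
      R.choice_add_of_forall_isMonotonicTransform (r := 0) (by simpa using hs) hτ (by simpa using h)

def IsQuota (P Q : Equiv.Perm (Fin n)) (k : ℕ) : Prop :=
  k ≤ m ∧ ∀ i j, i + j = m → (R.choice (replicate i P + replicate j Q) = Q 0 ↔ k ≤ j)

theorem exists_isQuota (P Q : Equiv.Perm (Fin n)) : ∃ k, R.IsQuota P Q k := by
  classical
  have hex : ∃ k, k ≤ m ∧ R.choice (replicate (m - k) P + replicate k Q) = Q 0 :=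
    ⟨m, le_rfl, by simp [R.unanimous]⟩
  obtain ⟨hkm, hk⟩ := Nat.find_spec hex
  refine ⟨Nat.find hex, hkm, fun i j hij => ⟨fun h => Nat.find_min' hex ⟨by omega, ?_⟩, fun hkj => ?_⟩⟩
  · rwa [show m - j = i by omega]
  · set k := Nat.find hex
    rw [show m - k = (j - k) + i by omega, replicate_add, add_assoc] at hk
    have := R.choice_replicate_add (τ := Q) (by simp; omega) (isMonotonicTransform_top P Q) hk
    rwa [add_left_comm, ← replicate_add, Nat.sub_add_cancel hkj] at this

def relabel (γ : Equiv.Perm (Fin n)) : AnonymousRule n m where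
  choice s := γ.symm (R.choice (s.map (·.trans γ)))
  strategyProof s ρ τ hs := by
    simpa [Equiv.symm_trans_apply] using
      R.strategyProof (s.map (·.trans γ)) (ρ.trans γ) (τ.trans γ) (by simpa using hs)
  unanimous σ := by simp [R.unanimous]

theorem isQuota_relabel {γ P Q P' Q' : Equiv.Perm (Fin n)} {k : ℕ} (hP : P.trans γ = P')
    (hQ : Q.trans γ = Q') (h : R.IsQuota P' Q' k) : (R.relabel γ).IsQuota P Q k := by
  subst hP hQ
  refine ⟨h.1, fun i j hij => ?_⟩
  rw [← h.2 i j hij]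
  simp [relabel, Equiv.symm_apply_eq]

end AnonymousRule

section ProfileRule

variable {n m : ℕ} [NeZero n]

noncomputable def profileChoice (g : (Fin m → Equiv.Perm (Fin n)) → Fin n)
    (s : Multiset (Equiv.Perm (Fin n))) : Fin n :=
  if h : ∃ L : Fin m → Equiv.Perm (Fin n), Finset.univ.val.map L = s then g h.choose else 0

theorem profileChoice_map {g : (Fin m → Equiv.Perm (Fin n)) → Fin n}
    (hanon : ∀ (σ : Equiv.Perm (Fin m)) L, g (L ∘ σ) = g L) (L : Fin m → Equiv.Perm (Fin n)) :
    profileChoice g (Finset.univ.val.map L) = g L := by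
  have h : ∃ L', Finset.univ.val.map L' = Finset.univ.val.map L := ⟨L, rfl⟩
  rw [profileChoice, dif_pos h]
  obtain ⟨σ, hσ⟩ := exists_perm_comp_eq_of_map_eq h.choose_spec
  exact (hanon σ _).symm.trans (congrArg g hσ)

noncomputable def AnonymousRule.ofProfileRule (g : (Fin m → Equiv.Perm (Fin n)) → Fin n)
    (hsp : ∀ (L : Fin m → Equiv.Perm (Fin n)) i τ,
      (L i).symm (g L) ≤ (L i).symm (g (Function.update L i τ)))
    (hanon : ∀ (σ : Equiv.Perm (Fin m)) L, g (L ∘ σ) = g L)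
    (hunan : ∀ σ, g (fun _ => σ) = σ 0) : AnonymousRule n m where
  choice := profileChoice g
  strategyProof s ρ τ hs := by
    obtain ⟨k, rfl⟩ : ∃ k, m = k + 1 := ⟨_, hs.symm⟩
    obtain ⟨K, rfl⟩ := exists_univ_map_eq s (Nat.succ_injective hs)
    have hcons : ∀ ρ', ρ' ::ₘ Finset.univ.val.map K = Finset.univ.val.map (Fin.cons ρ' K) := by
      simp [Fin.univ_val_map, List.ofFn_succ]
    rw [hcons, hcons, profileChoice_map hanon, profileChoice_map hanon]
    simpa [Fin.update_cons_zero] using hsp (Fin.cons ρ K) 0 τ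
  unanimous σ := by
    have hconst : replicate m σ = Finset.univ.val.map (fun _ : Fin m => σ) := by simp
    rw [hconst, profileChoice_map hanon, hunan]

end ProfileRule

namespace ThreeAlternatives

open AnonymousRule

/- The rankings of the alternatives `a, b, c = 0, 1, 2`, named from best to worst. -/

def abc : Equiv.Perm (Fin 3) := ⟨![0, 1, 2], ![0, 1, 2], by decide, by decide⟩
def bca : Equiv.Perm (Fin 3) := ⟨![1, 2, 0], ![2, 0, 1], by decide, by decide⟩
def cab : Equiv.Perm (Fin 3) := ⟨![2, 0, 1], ![1, 2, 0], by decide, by decide⟩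
def bac : Equiv.Perm (Fin 3) := ⟨![1, 0, 2], ![1, 0, 2], by decide, by decide⟩
def acb : Equiv.Perm (Fin 3) := ⟨![0, 2, 1], ![0, 2, 1], by decide, by decide⟩

variable {m : ℕ} (R : AnonymousRule 3 m)

theorem choice_cab_bca_of_choice_abc_bca {i j : ℕ} (hij : i + j = m)
    (h : R.choice (replicate i abc + replicate j bca) = 1) :
    R.choice (replicate i cab + replicate j bca) = 1 := by
  have hbac : R.choice (replicate i abc + replicate j bac) = 1 := by
    rw [add_comm] at h ⊢
    exact R.choice_replicate_add (by simpa [add_comm] using hij) (by decide) h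
  have hacb : R.choice (replicate i acb + replicate j bac) = 1 := by
    have hne_a : R.choice (replicate i acb + replicate j bac) ≠ 0 := fun ha => by
      have := R.choice_replicate_add (τ := abc) (by simpa using hij) (by decide) ha
      rw [hbac] at this
      exact absurd this (by decide)
    have hne_c : R.choice (replicate i acb + replicate j bac) ≠ 2 :=
      R.choice_ne_of_forall_isMonotonicTransform (τ := acb) (by simpa using hij)
        (by intro ρ hρ; rcases mem_add.1 hρ with hρ | hρ <;> rw [eq_of_mem_replicate hρ] <;> decide)
        (by decide)
    omega
  have hcab : R.choice (replicate i cab + replicate j bac) = 1 :=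
    R.choice_replicate_add (by simpa using hij) (by decide) hacb
  rw [add_comm] at hcab ⊢
  exact R.choice_replicate_add (by simpa [add_comm] using hij) (by decide) hcab

theorem lt_add_of_isQuota {k l : ℕ} (hk : R.IsQuota abc bca k) (hl : R.IsQuota bca cab l) :
    m < k + l := by
  by_contra! hkl
  have hb := choice_cab_bca_of_choice_abc_bca R (i := m - k) (j := k) (by omega)
    ((hk.2 _ _ (by omega)).2 le_rfl)
  have hc := (hl.2 k (m - k) (by omega)).2 (by omega)
  rw [add_comm, hb] at hc
  exact absurd hc (by decide)

theorem le_or_le_or_le_of_isQuota {k l n x y z : ℕ} (hk : R.IsQuota abc bca k)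
    (hl : R.IsQuota bca cab l) (hn : R.IsQuota cab abc n) (hxyz : x + y + z = m) :
    n ≤ x ∨ k ≤ y ∨ l ≤ z := by
  generalize hv : R.choice (replicate x abc + replicate y bca + replicate z cab) = v
  fin_cases v
  · rw [show replicate x abc + replicate y bca + replicate z cab
      = replicate y bca + (replicate z cab + replicate x abc) by abel] at hv
    have := R.choice_replicate_add (τ := cab) (by simp; omega) (by decide) hv
    rw [← add_assoc, ← replicate_add] at this
    exact Or.inl ((hn.2 _ _ (by omega)).1 this)
  · rw [show replicate x abc + replicate y bca + replicate z cab
      = replicate z cab + (replicate x abc + replicate y bca) by abel] at hv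
    have := R.choice_replicate_add (τ := abc) (by simp; omega) (by decide) hv
    rw [← add_assoc, ← replicate_add] at this
    exact Or.inr (Or.inl ((hk.2 _ _ (by omega)).1 this))
  · rw [add_assoc] at hv
    have := R.choice_replicate_add (τ := bca) (by simp; omega) (by decide) hv
    rw [← add_assoc, ← replicate_add] at this
    exact Or.inr (Or.inr ((hl.2 _ _ (by omega)).1 this))

theorem isEmpty_anonymousRule (hm : 2 ≤ m) : IsEmpty (AnonymousRule 3 m) := by
  refine ⟨fun R => ?_⟩
  obtain ⟨k, hk⟩ := R.exists_isQuota abc bca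
  obtain ⟨l, hl⟩ := R.exists_isQuota bca cab
  obtain ⟨n, hn⟩ := R.exists_isQuota cab abc
  have hkl := lt_add_of_isQuota R hk hl
  have hln := lt_add_of_isQuota (R.relabel bca)
    (R.isQuota_relabel (by decide) (by decide) hl) (R.isQuota_relabel (by decide) (by decide) hn)
  have hnk := lt_add_of_isQuota (R.relabel cab)
    (R.isQuota_relabel (by decide) (by decide) hn) (R.isQuota_relabel (by decide) (by decide) hk)
  have := hk.1
  have := hn.1
  obtain ⟨x, y, z, hxyz, hx, hy, hz⟩ : ∃ x y z, x + y + z = m ∧ x < n ∧ y < k ∧ z < l :=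
    ⟨min (n - 1) m, min (k - 1) (m - min (n - 1) m),
      m - min (n - 1) m - min (k - 1) (m - min (n - 1) m), by omega, by omega, by omega, by omega⟩
  rcases le_or_le_or_le_of_isQuota R hk hl hn hxyz with h | h | h <;> omega

end ThreeAlternatives

theorem strictAnti_of_fin_three {β : Type*} [Preorder β] {u : Fin 3 → β} (h01 : u 1 < u 0)
    (h12 : u 2 < u 1) : StrictAnti u :=
  Fin.strictAnti_iff_succ_lt.2 fun i => by fin_cases i <;> assumption

theorem eq_of_sum_le_of_strictAnti {Ω : Type*} {q : Ω → ℝ} {E : Fin 3 → Finset Ω}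
    {σ : Equiv.Perm (Fin 3)} {G : Finset Ω} (hE : StrictAnti fun t => ∑ ω ∈ E (σ t), q ω)
    (hG : G ∉ Set.range E → ∑ ω ∈ G, q ω < ∑ ω ∈ E (σ 2), q ω)
    (hle : ∑ ω ∈ E (σ 0), q ω ≤ ∑ ω ∈ G, q ω) : G = E (σ 0) := by
  by_cases hGE : G ∈ Set.range E
  · obtain ⟨t, rfl⟩ := hGE
    have ht : σ.symm t ≤ 0 := hE.le_iff_ge.1 (by simpa using hle)
    rw [σ.symm_apply_eq.1 (Fin.le_zero_iff.1 ht)]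
  · exact absurd hle (not_le.2 ((hG hGE).trans (hE (by decide))))

section EventSelector

variable {Ω : Type*} [Fintype Ω] {m : ℕ}

def IsStrategyProof (f : (Fin m → Ω → ℝ) → Finset Ω) : Prop :=
  ∀ p : Fin m → Ω → ℝ, (∀ i, IsBelief (p i)) → ∀ (i : Fin m) (p' : Ω → ℝ), IsBelief p' →
    ∑ ω ∈ f (Function.update p i p'), p i ω ≤ ∑ ω ∈ f p, p i ω

theorem apply_const_eq_of_forall_sum_le {f : (Fin m → Ω → ℝ) → Finset Ω}
    (hSP : IsStrategyProof f) {q : Ω → ℝ} (hq : IsBelief q) {T : Finset Ω}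
    (hT : ∀ p, (∀ i, IsBelief (p i)) → ∑ ω ∈ T, q ω ≤ ∑ ω ∈ f p, q ω → f p = T)
    {p : Fin m → Ω → ℝ} (hp : ∀ i, IsBelief (p i)) (hpT : f p = T) : f (fun _ => q) = T := by
  classical
  suffices ∀ s : Finset (Fin m), f (s.piecewise (fun _ => q) p) = T by
    simpa using this Finset.univ
  intro s
  induction s using Finset.induction_on with
  | empty => simpa using hpT
  | insert i s hi ih =>
    set p' := s.piecewise (fun _ => q) p
    have hp' : ∀ j, IsBelief (p' j) := fun j => by
      by_cases hj : j ∈ s <;> simp [p', hj, hq, hp]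
    have hpi : ∀ j, IsBelief (Function.update p' i q j) := fun j => by
      by_cases hj : j = i <;> simp [hj, hq, hp']
    rw [Finset.piecewise_insert]
    refine hT _ hpi ?_
    simpa [ih] using hSP _ hpi i (p' i) (hp' i)

end EventSelector

theorem stmt15_general {Ω : Type*} [Fintype Ω] (m : ℕ) (hm : 2 ≤ m)
    (f : (Fin m → (Ω → ℝ)) → Finset Ω)
    (hSP : ∀ p : Fin m → (Ω → ℝ), (∀ i, IsBelief (p i)) →
      ∀ (i : Fin m) (p' : Ω → ℝ), IsBelief p' →
        ∑ ω ∈ f (Function.update p i p'), p i ω ≤ ∑ ω ∈ f p, p i ω)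
    (E : Fin 3 → Finset Ω)
    (hErange : ∀ t : Fin 3, ∃ p, (∀ i, IsBelief (p i)) ∧ f p = E t)
    (π : Equiv.Perm (Fin 3) → (Ω → ℝ))
    (hπvalid : ∀ σ, IsBelief (π σ))
    (hπ : ∀ σ : Equiv.Perm (Fin 3),
      (∑ ω ∈ E (σ 1), π σ ω) < (∑ ω ∈ E (σ 0), π σ ω) ∧
      (∑ ω ∈ E (σ 2), π σ ω) < (∑ ω ∈ E (σ 1), π σ ω) ∧
      ∀ G : Finset Ω, (∃ p, (∀ i, IsBelief (p i)) ∧ f p = G) → G ∉ Set.range E →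
        (∑ ω ∈ G, π σ ω) < ∑ ω ∈ E (σ 2), π σ ω)
    (htop : ∀ p : Fin m → (Ω → ℝ), (∀ i, ∃ σ : Equiv.Perm (Fin 3), p i = π σ) →
      f p ∈ Set.range E) :
    ¬ (∀ (σ : Equiv.Perm (Fin m)) (p : Fin m → (Ω → ℝ)), (∀ i, IsBelief (p i)) →
        f (fun i => p (σ i)) = f p) := by
  intro hanon
  have hE σ : StrictAnti fun t => ∑ ω ∈ E (σ t), π σ ω :=
    strictAnti_of_fin_three (hπ σ).1 (hπ σ).2.1
  have hEinj : Function.Injective E := fun s t hst => (hE 1).injective (by simp [hst])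
  have hvalid (L : Fin m → Equiv.Perm (Fin 3)) i : IsBelief ((π ∘ L) i) := hπvalid (L i)
  choose g hg using fun L : Fin m → Equiv.Perm (Fin 3) => htop (π ∘ L) fun i => ⟨L i, rfl⟩
  refine (ThreeAlternatives.isEmpty_anonymousRule hm).false
    (AnonymousRule.ofProfileRule g (fun L i τ => ?_) (fun σ L => ?_) (fun σ => ?_))
  · have h := hSP (π ∘ L) (hvalid L) i (π τ) (hπvalid τ)
    rw [← Function.comp_update, ← hg, ← hg, ← (L i).apply_symm_apply (g L),
      ← (L i).apply_symm_apply (g (Function.update L i τ))] at h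
    exact (hE (L i)).le_iff_ge.1 h
  · exact hEinj ((hg _).trans ((hanon σ (π ∘ L) (hvalid L)).trans (hg L).symm))
  · obtain ⟨p, hp, hpE⟩ := hErange (σ 0)
    refine hEinj ((hg _).trans (apply_const_eq_of_forall_sum_le hSP (hπvalid σ)
      (fun p' hp' hle => eq_of_sum_le_of_strictAnti (hE σ) ((hπ σ).2.2 _ ⟨p', hp', rfl⟩) hle) hp hpE))

/-- A strategy-proof event selector whose range contains a top triple is not
anonymous (via the Gibbard–Satterthwaite theorem). -/
theorem stmt15 {Ω : Type*} [Fintype Ω] [DecidableEq Ω] (m : ℕ) (hm : 2 ≤ m)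
    (f : (Fin m → (Ω → ℝ)) → Finset Ω)
    (hSP : ∀ p : Fin m → (Ω → ℝ), (∀ i, IsBelief (p i)) →
      ∀ (i : Fin m) (p' : Ω → ℝ), IsBelief p' →
        ∑ ω ∈ f (Function.update p i p'), p i ω ≤ ∑ ω ∈ f p, p i ω)
    (E : Fin 3 → Finset Ω)
    (hErange : ∀ t : Fin 3, ∃ p, (∀ i, IsBelief (p i)) ∧ f p = E t)
    (π : Equiv.Perm (Fin 3) → (Ω → ℝ))
    (hπvalid : ∀ σ, IsBelief (π σ))
    (hπ : ∀ σ : Equiv.Perm (Fin 3),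
      (∑ ω ∈ E (σ 1), π σ ω) < (∑ ω ∈ E (σ 0), π σ ω) ∧
      (∑ ω ∈ E (σ 2), π σ ω) < (∑ ω ∈ E (σ 1), π σ ω) ∧
      ∀ G : Finset Ω, (∃ p, (∀ i, IsBelief (p i)) ∧ f p = G) → G ∉ Set.range E →
        (∑ ω ∈ G, π σ ω) < ∑ ω ∈ E (σ 2), π σ ω)
    (htop : ∀ p : Fin m → (Ω → ℝ), (∀ i, ∃ σ : Equiv.Perm (Fin 3), p i = π σ) →
      f p ∈ Set.range E) :
    ¬ (∀ (σ : Equiv.Perm (Fin m)) (p : Fin m → (Ω → ℝ)), (∀ i, IsBelief (p i)) →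
        f (fun i => p (σ i)) = f p) :=
  stmt15_general m hm f hSP E hErange π hπvalid hπ htop
end

section
/- Let n ≥ 2, let Ω and X be finite with distinct a,b ∈ X, and let φ be any binary SCF into {a,b}^Ω that is strategy-proof, anonymous, and satisfies: there is a fixed state ω₀ and for every valuation profile v the outcome φ(v,p)(ω₀) is independent of the belief profile p. Then for all valuation profiles v and belief profiles p, q such that every agent's conditional belief on Ω ∖ {ω₀} agrees between p and q (p_i(E)/p_i(Ω∖{ω₀}) = q_i(E)/q_i(Ω∖{ω₀}) for all E ⊆ Ω∖{ω₀} and all i), the restrictions of the selected acts to Ω ∖ {ω₀} coincide: φ(v,p)(ω) = φ(v,q)(ω) for all ω ≠ ω₀. -/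
/-- Constant separation: if the outcome in state `ω₀` never responds to beliefs,
then the selected act off `ω₀` depends only on the conditional beliefs off `ω₀`. -/
theorem stmt16 {Ω X : Type*} [Fintype Ω] [Fintype X] [DecidableEq Ω]
    (a b : X) (hab : a ≠ b) (n : ℕ) (hn : 2 ≤ n) (ω₀ : Ω)
    (φ : (Fin n → X → ℝ) → (Fin n → Ω → ℝ) → Ω → X)
    (hbin : ∀ v p ω, φ v p ω = a ∨ φ v p ω = b)
    (hSP : ∀ (v : Fin n → X → ℝ) (p : Fin n → Ω → ℝ), (∀ i, ValidPref (v i) (p i)) →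
      ∀ (i : Fin n) (v' : X → ℝ) (p' : Ω → ℝ), ValidPref v' p' →
        ∑ ω, p i ω * v i (φ (Function.update v i v') (Function.update p i p') ω)
          ≤ ∑ ω, p i ω * v i (φ v p ω))
    (hanon : ∀ (v : Fin n → X → ℝ) (p : Fin n → Ω → ℝ), (∀ i, ValidPref (v i) (p i)) →
      ∀ σ : Equiv.Perm (Fin n), φ (fun i => v (σ i)) (fun i => p (σ i)) = φ v p)
    (hconst : ∀ (v : Fin n → X → ℝ) (p q : Fin n → Ω → ℝ),
      (∀ i, ValidPref (v i) (p i)) → (∀ i, ValidPref (v i) (q i)) →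
      φ v p ω₀ = φ v q ω₀)
    (v : Fin n → X → ℝ) (p q : Fin n → Ω → ℝ)
    (hvp : ∀ i, ValidPref (v i) (p i)) (hvq : ∀ i, ValidPref (v i) (q i))
    (hcond : ∀ (i : Fin n) (Efin : Finset Ω), ω₀ ∉ Efin →
      (∑ ω ∈ Efin, p i ω) / (∑ ω ∈ ({ω₀}ᶜ : Finset Ω), p i ω)
        = (∑ ω ∈ Efin, q i ω) / (∑ ω ∈ ({ω₀}ᶜ : Finset Ω), q i ω)) :
    ∀ ω : Ω, ω ≠ ω₀ → φ v p ω = φ v q ω := by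
  classical
  -- One-step lemma: updating a single agent's belief from `p i` to `q i`
  -- does not change the chosen act at all.
  have key : ∀ (P : Fin n → Ω → ℝ), (∀ j, ValidPref (v j) (P j)) →
      ∀ i : Fin n, P i = p i → φ v P = φ v (Function.update P i (q i)) := by
    intro P hP i hPi
    set P' := Function.update P i (q i) with hP'def
    have hP' : ∀ j, ValidPref (v j) (P' j) := by
      intro j
      by_cases h : j = i
      · subst h; simpa [P'] using hvq j
      · simpa [P', Function.update_of_ne h] using hP j
    set f := φ v P with hf
    set g := φ v P' with hg
    have h0 : f ω₀ = g ω₀ := hconst v P P' hP hP'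
    have sp1 : ∑ ω, p i ω * v i (g ω) ≤ ∑ ω, p i ω * v i (f ω) := by
      have := hSP v P hP i (v i) (q i) (hvq i)
      simpa [Function.update_eq_self, ← hP'def, hPi, ← hf, ← hg] using this
    have sp2 : ∑ ω, q i ω * v i (f ω) ≤ ∑ ω, q i ω * v i (g ω) := by
      have := hSP v P' hP' i (v i) (p i) (hvp i)
      have hupd : Function.update P' i (p i) = P := by
        funext j; by_cases h : j = i
        · subst h; simp [hPi]
        · simp [P', Function.update_of_ne h]
      have hPi' : P' i = q i := by simp [P']
      simpa [Function.update_eq_self, hupd, hPi', ← hf, ← hg] using this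
    by_cases hne : (Finset.univ.erase ω₀ : Finset Ω).Nonempty
    · -- split sums at ω₀
      have split : ∀ (r : Ω → ℝ) (h : Ω → X),
          ∑ ω, r ω * v i (h ω)
            = (∑ ω ∈ Finset.univ.erase ω₀, r ω * v i (h ω)) + r ω₀ * v i (h ω₀) :=
        fun r h => (Finset.sum_erase_add _ _ (Finset.mem_univ ω₀)).symm
      set E : Finset Ω := Finset.univ.erase ω₀ with hE
      have hEcompl : ({ω₀}ᶜ : Finset Ω) = E := by
        ext x; simp [hE, eq_comm]
      set Pp : ℝ := ∑ ω ∈ E, p i ω with hPp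
      set Pq : ℝ := ∑ ω ∈ E, q i ω with hPq
      have hPppos : 0 < Pp := Finset.sum_pos (fun ω _ => (hvp i).2.1 ω) hne
      have hPqpos : 0 < Pq := Finset.sum_pos (fun ω _ => (hvq i).2.1 ω) hne
      have hpt : ∀ ω ∈ E, p i ω = (Pp / Pq) * q i ω := by
        intro ω hω
        have hωne : ω ≠ ω₀ := (Finset.mem_erase.mp hω).1
        have hc := hcond i {ω} (by simpa using hωne.symm)
        rw [hEcompl] at hc
        simp only [Finset.sum_singleton, ← hPp, ← hPq] at hc
        have h1 : p i ω * Pq = q i ω * Pp :=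
          (div_eq_div_iff hPppos.ne' hPqpos.ne').mp hc
        field_simp
        linarith [h1]
      have hEp : ∑ ω ∈ E, p i ω * (v i (g ω) - v i (f ω))
          = (Pp / Pq) * ∑ ω ∈ E, q i ω * (v i (g ω) - v i (f ω)) := by
        rw [Finset.mul_sum]
        refine Finset.sum_congr rfl fun ω hω => ?_
        rw [hpt ω hω]; ring
      have hS1 : ∑ ω ∈ E, p i ω * v i (g ω) ≤ ∑ ω ∈ E, p i ω * v i (f ω) := by
        have := sp1
        rw [split (p i) g, split (p i) f, h0] at this
        linarith
      have hS2 : ∑ ω ∈ E, q i ω * v i (f ω) ≤ ∑ ω ∈ E, q i ω * v i (g ω) := by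
        have := sp2
        rw [split (q i) f, split (q i) g, h0] at this
        linarith
      have hDq : ∑ ω ∈ E, q i ω * (v i (g ω) - v i (f ω)) = 0 := by
        have h1 : ∑ ω ∈ E, p i ω * (v i (g ω) - v i (f ω)) ≤ 0 := by
          have hx : ∑ ω ∈ E, p i ω * (v i (g ω) - v i (f ω))
              = (∑ ω ∈ E, p i ω * v i (g ω)) - ∑ ω ∈ E, p i ω * v i (f ω) := by
            rw [← Finset.sum_sub_distrib]
            exact Finset.sum_congr rfl fun ω _ => by ring
          rw [hx]; linarith
        have h2 : 0 ≤ ∑ ω ∈ E, q i ω * (v i (g ω) - v i (f ω)) := by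
          have hx : ∑ ω ∈ E, q i ω * (v i (g ω) - v i (f ω))
              = (∑ ω ∈ E, q i ω * v i (g ω)) - ∑ ω ∈ E, q i ω * v i (f ω) := by
            rw [← Finset.sum_sub_distrib]
            exact Finset.sum_congr rfl fun ω _ => by ring
          rw [hx]; linarith
        rw [hEp] at h1
        have hα : 0 < Pp / Pq := div_pos hPppos hPqpos
        nlinarith
      have hfull : ∑ ω, q i ω * v i (f ω) = ∑ ω, q i ω * v i (g ω) := by
        rw [split (q i) f, split (q i) g, h0]
        have hEq : ∑ ω ∈ E, q i ω * v i (f ω) = ∑ ω ∈ E, q i ω * v i (g ω) := by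
          have hx : ∑ ω ∈ E, q i ω * (v i (g ω) - v i (f ω))
              = (∑ ω ∈ E, q i ω * v i (g ω)) - ∑ ω ∈ E, q i ω * v i (f ω) := by
            rw [← Finset.sum_sub_distrib]
            exact Finset.sum_congr rfl fun ω _ => by ring
          rw [hx] at hDq
          linarith
        linarith [hEq]
      by_contra hne2
      exact (hvq i).2.2.2.2 f g hne2 hfull
    · -- Ω has only the state ω₀
      funext ω
      by_cases hω : ω = ω₀
      · rw [hω]; exact h0
      · exact absurd ⟨ω, Finset.mem_erase.mpr ⟨hω, Finset.mem_univ ω⟩⟩ hne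
  -- Hybrid profiles
  have main : φ v p = φ v q := by
    set r : ℕ → Fin n → Ω → ℝ := fun k i => if (i : ℕ) < k then q i else p i with hr
    have hrvalid : ∀ k j, ValidPref (v j) (r k j) := by
      intro k j
      by_cases h : (j : ℕ) < k
      · simpa [r, h] using hvq j
      · simpa [r, h] using hvp j
    have hstep : ∀ k, φ v p = φ v (r k) := by
      intro k
      induction k with
      | zero =>
        have h0 : r 0 = p := by funext i; simp [r]
        rw [h0]
      | succ k ih =>
        by_cases hk : k < n
        · have hupd : r (k + 1) = Function.update (r k) ⟨k, hk⟩ (q ⟨k, hk⟩) := by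
            funext j
            by_cases h : j = (⟨k, hk⟩ : Fin n)
            · subst h; simp [r]
            · have hj : (j : ℕ) ≠ k := fun hh => h (Fin.ext hh)
              rw [Function.update_of_ne h]
              by_cases hlt : (j : ℕ) < k
              · simp [r, hlt, Nat.lt_succ_of_lt hlt]
              · have h2 : ¬ (j : ℕ) < k + 1 := by omega
                simp [r, hlt, h2]
          rw [ih, hupd]
          exact key (r k) (hrvalid k) ⟨k, hk⟩ (by simp [r])
        · have heq : r (k + 1) = r k := by
            funext j
            have hjn : (j : ℕ) < n := j.2
            have h1 : (j : ℕ) < k := by omega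
            simp [r, h1, Nat.lt_succ_of_lt h1]
          rw [heq]; exact ih
    have hq : r n = q := by
      funext i; simp [r, i.2]
    rw [hstep n, hq]
  intro ω _
  rw [main]
end

section
/- Let k ∈ {1,…,n−1} and let α : P^k × P^{n−k} → Pow(Ω) satisfy: (I) p_i(α(p,q)) = max over p'_i of p_i(α((p'_i,p_{−i}),q)) for every i ≤ k, and (II) q_j(α(p,q)) = min over q'_j of q_j(α(p,(q'_j,q_{−j}))) for every j ≤ n−k; and suppose the range of α consists of pairwise non-nested events. Fix E in the range of α. If π₁ satisfies π₁(E') < π₁(E) for every other range event E' and π₂ satisfies π₂(E) < π₂(E') for every other range event E', then α applied to the profile where all k first-group agents report π₁ and all n−k second-group agents report π₂ equals E. -/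
/-- Event-unanimity: if every maximizing agent finds `E` most likely among range
events and every minimizing agent finds `E` least likely among range events, then
the unanimous profile selects `E`. -/
theorem stmt17 {Ω : Type*} [Fintype Ω] [DecidableEq Ω] (k m : ℕ) (hk : 1 ≤ k) (hm : 1 ≤ m)
    (α : (Fin k → (Ω → ℝ)) → (Fin m → (Ω → ℝ)) → Finset Ω)
    (InRange : Finset Ω → Prop)
    (hInRange : ∀ G : Finset Ω, InRange G ↔
      ∃ p q, (∀ i, IsBelief (p i)) ∧ (∀ j, IsBelief (q j)) ∧ α p q = G)
    (hI : ∀ p q, (∀ i, IsBelief (p i)) → (∀ j, IsBelief (q j)) →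
      ∀ (i : Fin k) (p' : Ω → ℝ), IsBelief p' →
        ∑ ω ∈ α (Function.update p i p') q, p i ω ≤ ∑ ω ∈ α p q, p i ω)
    (hII : ∀ p q, (∀ i, IsBelief (p i)) → (∀ j, IsBelief (q j)) →
      ∀ (j : Fin m) (q' : Ω → ℝ), IsBelief q' →
        ∑ ω ∈ α p q, q j ω ≤ ∑ ω ∈ α p (Function.update q j q'), q j ω)
    (hnn : ∀ G G', InRange G → InRange G' → G ≠ G' →
      (G \ G').Nonempty ∧ (G' \ G).Nonempty)
    (E : Finset Ω) (hE : InRange E)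
    (π₁ π₂ : Ω → ℝ) (hπ₁ : IsBelief π₁) (hπ₂ : IsBelief π₂)
    (hmax : ∀ G, InRange G → G ≠ E → (∑ ω ∈ G, π₁ ω) < ∑ ω ∈ E, π₁ ω)
    (hmin : ∀ G, InRange G → G ≠ E → (∑ ω ∈ E, π₂ ω) < ∑ ω ∈ G, π₂ ω) :
    α (fun _ => π₁) (fun _ => π₂) = E := by
  obtain ⟨p0, q0, hp0, hq0, hα0⟩ := (hInRange E).mp hE
  have stepP : ∀ (p : Fin k → Ω → ℝ) (q : Fin m → Ω → ℝ),
      (∀ i, IsBelief (p i)) → (∀ j, IsBelief (q j)) → α p q = E →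
      ∀ i : Fin k, α (Function.update p i π₁) q = E := by
    intro p q hp hq hpq i
    have hp' : ∀ i', IsBelief (Function.update p i π₁ i') := by
      intro i'; rcases eq_or_ne i' i with h | h
      · subst h; simpa using hπ₁
      · simpa [Function.update_of_ne h] using hp i'
    have hrange : InRange (α (Function.update p i π₁) q) :=
      (hInRange _).mpr ⟨_, _, hp', hq, rfl⟩
    have key := hI (Function.update p i π₁) q hp' hq i (p i) (hp i)
    rw [Function.update_idem, Function.update_eq_self, hpq,
        Function.update_self] at key
    by_contra hne
    exact absurd key (not_le.mpr (hmax _ hrange hne))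
  have stepQ : ∀ (p : Fin k → Ω → ℝ) (q : Fin m → Ω → ℝ),
      (∀ i, IsBelief (p i)) → (∀ j, IsBelief (q j)) → α p q = E →
      ∀ j : Fin m, α p (Function.update q j π₂) = E := by
    intro p q hp hq hpq j
    have hq' : ∀ j', IsBelief (Function.update q j π₂ j') := by
      intro j'; rcases eq_or_ne j' j with h | h
      · subst h; simpa using hπ₂
      · simpa [Function.update_of_ne h] using hq j'
    have hrange : InRange (α p (Function.update q j π₂)) :=
      (hInRange _).mpr ⟨_, _, hp, hq', rfl⟩
    have key := hII p (Function.update q j π₂) hp hq' j (q j) (hq j)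
    rw [Function.update_idem, Function.update_eq_self, hpq,
        Function.update_self] at key
    by_contra hne
    exact absurd key (not_le.mpr (hmin _ hrange hne))
  -- replace first-group beliefs one at a time
  have hPstage : ∀ t : ℕ, t ≤ k →
      α (fun i => if (i : ℕ) < t then π₁ else p0 i) q0 = E := by
    intro t
    induction t with
    | zero => intro _; simpa using hα0
    | succ t ih =>
      intro ht
      have ht' : t < k := ht
      have hpt : ∀ i : Fin k, IsBelief (if (i : ℕ) < t then π₁ else p0 i) := by
        intro i; split
        · exact hπ₁
        · exact hp0 i
      have hstep := stepP (fun i => if (i : ℕ) < t then π₁ else p0 i) q0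
        hpt hq0 (ih ht'.le) ⟨t, ht'⟩
      have hfun : Function.update (fun i : Fin k => if (i : ℕ) < t then π₁ else p0 i)
          ⟨t, ht'⟩ π₁ = fun i : Fin k => if (i : ℕ) < t + 1 then π₁ else p0 i := by
        funext i
        rcases eq_or_ne i (⟨t, ht'⟩ : Fin k) with h | h
        · subst h; simp
        · have hne : (i : ℕ) ≠ t := fun hc => h (Fin.ext hc)
          rw [Function.update_of_ne h]
          simp [Nat.lt_succ_iff_lt_or_eq, hne, Nat.le_iff_lt_or_eq]
      rwa [hfun] at hstep
  have hP : α (fun _ => π₁) q0 = E := by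
    have := hPstage k le_rfl
    have hfun : (fun i : Fin k => if (i : ℕ) < k then π₁ else p0 i) = fun _ => π₁ := by
      funext i; simp [i.isLt]
    rwa [hfun] at this
  -- replace second-group beliefs one at a time
  have hQstage : ∀ t : ℕ, t ≤ m →
      α (fun _ => π₁) (fun j => if (j : ℕ) < t then π₂ else q0 j) = E := by
    intro t
    induction t with
    | zero => intro _; simpa using hP
    | succ t ih =>
      intro ht
      have ht' : t < m := ht
      have hqt : ∀ j : Fin m, IsBelief (if (j : ℕ) < t then π₂ else q0 j) := by
        intro j; split
        · exact hπ₂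
        · exact hq0 j
      have hstep := stepQ (fun _ => π₁) (fun j => if (j : ℕ) < t then π₂ else q0 j)
        (fun _ => hπ₁) hqt (ih ht'.le) ⟨t, ht'⟩
      have hfun : Function.update (fun j : Fin m => if (j : ℕ) < t then π₂ else q0 j)
          ⟨t, ht'⟩ π₂ = fun j : Fin m => if (j : ℕ) < t + 1 then π₂ else q0 j := by
        funext j
        rcases eq_or_ne j (⟨t, ht'⟩ : Fin m) with h | h
        · subst h; simp
        · have hne : (j : ℕ) ≠ t := fun hc => h (Fin.ext hc)
          rw [Function.update_of_ne h]
          simp [Nat.lt_succ_iff_lt_or_eq, hne, Nat.le_iff_lt_or_eq]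
      rwa [hfun] at hstep
  have := hQstage m le_rfl
  have hfun : (fun j : Fin m => if (j : ℕ) < m then π₂ else q0 j) = fun _ => π₂ := by
    funext j; simp [j.isLt]
  rwa [hfun] at this
end
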